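/- arXiv:1706.06043 — 6 statements merged into one kernel-verified Lean document; each statement's English description precedes it below -/
import Mathlib

section
/- Let (X, d) be a metric space equipped with a finite Borel measure μ, let ψ be a cutoff function, let r > 0, and suppose there is a constant c > 0 such that ψ_r(x) := ∫_X ψ(d(x,z)/r) dμ(z) ≥ c for every x ∈ X. Then for every integrable function u : X → ℝ^ν, the mollified map ψ_r ∗ u : X → ℝ^ν, defined by (ψ_r ∗ u)(x) = (1/ψ_r(x)) ∫_X ψ(d(x,z)/r) u(z) dμ(z), is Lipschitz continuous; moreover its Lipschitz constant is at most C · ∫_X ‖u‖ dμ, where C depends only on Lip(ψ), r, c and μ(X). -/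
open MeasureTheory Metric Set
open scoped NNReal

/-!
Write the mollification as `g x / f x` with `f x = ∫ ψ(d(x,z)/r) dμ` and
`g x = ∫ ψ(d(x,z)/r) u dμ`. The kernel is `Lip(ψ)/r`-Lipschitz in `x` and bounded by `1`, so `f`
and `g` are Lipschitz with constants `Lip(ψ)/r · μ(X)` and `Lip(ψ)/r · ∫ ‖u‖`, while
`‖g‖ ≤ ∫ ‖u‖` and `f ≥ c`. The quotient rule
`‖g x / f x - g y / f y‖ ≤ ‖g x - g y‖ / c + |f x - f y| ‖g y‖ / c²` then gives the estimate.
-/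

section NormalizedIntegral

variable {X E : Type*} [MeasurableSpace X] {μ : Measure X}
  [NormedAddCommGroup E] [NormedSpace ℝ E]

theorem norm_inv_smul_sub_inv_smul_le {a b c : ℝ} (hc : 0 < c) (ha : c ≤ a) (hb : c ≤ b)
    (v w : E) :
    ‖a⁻¹ • v - b⁻¹ • w‖ ≤ c⁻¹ * ‖v - w‖ + |a - b| / (c * c) * ‖w‖ := by
  have ha₀ : 0 < a := hc.trans_le ha
  have hb₀ : 0 < b := hc.trans_le hb
  have hinv : |a⁻¹ - b⁻¹| ≤ |a - b| / (c * c) := by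
    rw [inv_sub_inv ha₀.ne' hb₀.ne', abs_div, abs_of_pos (mul_pos ha₀ hb₀), abs_sub_comm]
    gcongr
  calc ‖a⁻¹ • v - b⁻¹ • w‖ = ‖a⁻¹ • (v - w) + (a⁻¹ - b⁻¹) • w‖ := by
        rw [smul_sub, sub_smul, sub_add_sub_cancel]
    _ ≤ a⁻¹ * ‖v - w‖ + |a⁻¹ - b⁻¹| * ‖w‖ := by
        refine (norm_add_le _ _).trans_eq ?_
        rw [norm_smul, norm_smul, Real.norm_eq_abs, Real.norm_eq_abs, abs_inv, abs_of_pos ha₀]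
    _ ≤ c⁻¹ * ‖v - w‖ + |a - b| / (c * c) * ‖w‖ := by
        gcongr

theorem norm_integral_smul_le_of_abs_le {a : X → ℝ} {u : X → E} {ε : ℝ}
    (ha : ∀ z, |a z| ≤ ε) (hu : Integrable u μ) :
    ‖∫ z, a z • u z ∂μ‖ ≤ ε * ∫ z, ‖u z‖ ∂μ := by
  rw [← integral_const_mul]
  refine norm_integral_le_of_norm_le (hu.norm.const_mul ε) (ae_of_all _ fun z => ?_)
  rw [norm_smul, Real.norm_eq_abs]
  exact mul_le_mul_of_nonneg_right (ha z) (norm_nonneg _)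

theorem integrable_smul_of_abs_le {a : X → ℝ} {u : X → E} {ε : ℝ}
    (ha_meas : AEStronglyMeasurable a μ) (ha : ∀ z, |a z| ≤ ε) (hu : Integrable u μ) :
    Integrable (fun z => a z • u z) μ :=
  (hu.norm.const_mul ε).mono' (ha_meas.smul hu.1) (ae_of_all _ fun z => by
    rw [norm_smul, Real.norm_eq_abs]
    exact mul_le_mul_of_nonneg_right (ha z) (norm_nonneg _))

theorem lipschitzWith_normalized_integral [PseudoMetricSpace X] [IsFiniteMeasure μ]
    {k : X → X → ℝ} {K : ℝ≥0} {c : ℝ} (hc : 0 < c) (hk_meas : ∀ x, AEStronglyMeasurable (k x) μ)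
    (hk_le : ∀ x z, |k x z| ≤ 1) (hk_lip : ∀ z, LipschitzWith K fun x => k x z)
    (hk_lower : ∀ x, c ≤ ∫ z, k x z ∂μ) {u : X → E} (hu : Integrable u μ) :
    LipschitzWith (Real.toNNReal (K / c * (1 + μ.real univ / c) * ∫ z, ‖u z‖ ∂μ))
      fun x => (∫ z, k x z ∂μ)⁻¹ • ∫ z, k x z • u z ∂μ := by
  have hI : 0 ≤ ∫ z, ‖u z‖ ∂μ := integral_nonneg fun z => norm_nonneg _
  have hk_sub : ∀ x y z, |k x z - k y z| ≤ K * dist x y := fun x y z =>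
    (hk_lip z).dist_le_mul x y
  refine LipschitzWith.of_dist_le_mul fun x y => ?_
  rw [Real.coe_toNNReal _ (by positivity), dist_eq_norm]
  have hf : |∫ z, k x z ∂μ - ∫ z, k y z ∂μ| ≤ K * dist x y * μ.real univ := by
    have hk_int : ∀ x, Integrable (k x) μ := fun x =>
      .of_bound (hk_meas x) 1 (ae_of_all _ (hk_le x))
    rw [← integral_sub (hk_int x) (hk_int y)]
    exact norm_integral_le_of_norm_le_const (f := fun z => k x z - k y z)
      (ae_of_all _ (hk_sub x y))
  have hg : ‖∫ z, k x z • u z ∂μ - ∫ z, k y z • u z ∂μ‖ ≤ K * dist x y * ∫ z, ‖u z‖ ∂μ := by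
    rw [← integral_sub (integrable_smul_of_abs_le (hk_meas x) (hk_le x) hu)
      (integrable_smul_of_abs_le (hk_meas y) (hk_le y) hu)]
    simp_rw [← sub_smul]
    exact norm_integral_smul_le_of_abs_le (hk_sub x y) hu
  have hgy : ‖∫ z, k y z • u z ∂μ‖ ≤ ∫ z, ‖u z‖ ∂μ := by
    simpa using norm_integral_smul_le_of_abs_le (hk_le y) hu
  calc _ ≤ c⁻¹ * ‖∫ z, k x z • u z ∂μ - ∫ z, k y z • u z ∂μ‖
        + |∫ z, k x z ∂μ - ∫ z, k y z ∂μ| / (c * c) * ‖∫ z, k y z • u z ∂μ‖ :=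
        norm_inv_smul_sub_inv_smul_le hc (hk_lower x) (hk_lower y) _ _
    _ ≤ c⁻¹ * (K * dist x y * ∫ z, ‖u z‖ ∂μ)
        + K * dist x y * μ.real univ / (c * c) * ∫ z, ‖u z‖ ∂μ := by
        gcongr
    _ = K / c * (1 + μ.real univ / c) * (∫ z, ‖u z‖ ∂μ) * dist x y := by
        field_simp

end NormalizedIntegral

theorem LipschitzOnWith.lipschitzWith_comp_dist_div {X : Type*} [PseudoMetricSpace X]
    {ψ : ℝ → ℝ} {L : ℝ≥0} (hψ : LipschitzOnWith L ψ (Ici 0)) {r : ℝ} (hr : 0 < r) (z : X) :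
    LipschitzWith (L / r.toNNReal) fun x => ψ (dist x z / r) := by
  refine LipschitzWith.of_dist_le_mul fun x y => ?_
  have hmem : ∀ w, dist w z / r ∈ Ici 0 := fun w => div_nonneg dist_nonneg hr.le
  calc dist (ψ (dist x z / r)) (ψ (dist y z / r))
      ≤ L * dist (dist x z / r) (dist y z / r) := hψ.dist_le_mul _ (hmem x) _ (hmem y)
    _ = L * (|dist x z - dist y z| / r) := by
        rw [Real.dist_eq, div_sub_div_same, abs_div, abs_of_pos hr]
    _ ≤ L * (dist x y / r) := by
        gcongr
        exact abs_dist_sub_le x y z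
    _ = ↑(L / r.toNNReal) * dist x y := by
        rw [NNReal.coe_div, Real.coe_toNNReal _ hr.le]
        ring

/-- On a metric space with a finite Borel measure (total mass `V`), if `ψ` is a
cutoff function with Lipschitz constant `L` and `ψ_r(x) ≥ c > 0` for every `x`, then for every
integrable `u : X → ℝ^ν` the normalized mollification `ψ_r ∗ u` is Lipschitz with constant at
most `C · ∫ ‖u‖ dμ`, where `C` depends only on `L`, `r`, `c` and `μ(X) = V`. -/
theorem stmt_1 (L : NNReal) (r c : ℝ) (V : ENNReal)
    (hr : 0 < r) (hc : 0 < c) (hV : V ≠ ⊤) :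
    ∃ C : ℝ, 0 < C ∧
      ∀ (X : Type) [MetricSpace X] [MeasurableSpace X] [BorelSpace X]
        (μ : Measure X), μ Set.univ = V →
      ∀ (ψ : ℝ → ℝ), LipschitzOnWith L ψ (Set.Ici 0) →
        (∀ t : ℝ, 0 ≤ t → ψ t ∈ Set.Icc (0 : ℝ) 1) →
        (∀ t : ℝ, 1 ≤ t → ψ t = 0) →
        (∀ x : X, c ≤ ∫ z, ψ (dist x z / r) ∂μ) →
      ∀ (ν : ℕ) (u : X → EuclideanSpace ℝ (Fin ν)), Integrable u μ →
        LipschitzWith (Real.toNNReal (C * ∫ z, ‖u z‖ ∂μ))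
          (fun x : X =>
            (∫ z, ψ (dist x z / r) ∂μ)⁻¹ • ∫ z, ψ (dist x z / r) • u z ∂μ) := by
  -- `+ 1` keeps `C` positive when `L = 0`.
  refine ⟨(L / r + 1) / c * (1 + V.toReal / c), by positivity, ?_⟩
  intro X _ _ _ μ hμ ψ hψ_lip hψ_mem _ hψ_lower ν u hu
  have : IsFiniteMeasure μ := ⟨hμ ▸ hV.lt_top⟩
  have hk_lip := hψ_lip.lipschitzWith_comp_dist_div (X := X) hr
  have hk_cont : ∀ x, Continuous fun z => ψ (dist x z / r) := fun x => by
    simpa only [dist_comm] using (hk_lip x).continuous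
  have hk_le : ∀ x z : X, |ψ (dist x z / r)| ≤ 1 := fun x z => by
    obtain ⟨h₀, h₁⟩ := hψ_mem (dist x z / r) (div_nonneg dist_nonneg hr.le)
    exact abs_le.2 ⟨by linarith, h₁⟩
  refine (lipschitzWith_normalized_integral hc (fun x => (hk_cont x).aestronglyMeasurable)
    hk_le hk_lip hψ_lower hu).weaken (Real.toNNReal_le_toNNReal ?_)
  have hK : ((L / r.toNNReal : ℝ≥0) : ℝ) ≤ L / r + 1 := by
    rw [NNReal.coe_div, Real.coe_toNNReal _ hr.le]
    linarith
  rw [measureReal_def, hμ]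
  gcongr
end

section
/- Let n ≥ 1 be an integer, j ∈ {1, …, n}, and let φ : ℝ → ℝ be a smooth function with φ(t) = 0 for all t ≥ 1, with bounded values and bounded derivative. For r > 0 define K_r : ℝⁿ ∖ {0} → ℝ by K_r(y) = φ(|y|/r) · y_j / |y|^{n+1}. Then there is a constant B, depending only on n, sup|φ| and sup|φ'| (in particular independent of r), such that for every r > 0 and every y ∈ ℝⁿ ∖ {0}, the gradient of K_r satisfies ‖∇K_r(y)‖ ≤ B / |y|^{n+1}. -/
open MeasureTheory Metric

set_option maxHeartbeats 1000000 in
/-- For `n ≥ 1`, `j ∈ {1,…,n}`, and a smooth `φ : ℝ → ℝ` vanishing on `[1,∞)`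
with bounded values and bounded derivative, the truncated Riesz-type kernels
`K_r(y) = φ(|y|/r)·y_j/|y|^{n+1}` satisfy the gradient bound `‖∇K_r(y)‖ ≤ B/|y|^{n+1}` for all
`r > 0` and `y ≠ 0`, with `B` depending only on `n`, `sup|φ|` and `sup|φ'|` (not on `r`). -/
theorem stmt_4 (n : ℕ) (hn : 1 ≤ n) (A A' : ℝ) :
    ∃ B : ℝ, 0 < B ∧
      ∀ (j : Fin n) (φ : ℝ → ℝ), ContDiff ℝ (⊤ : ℕ∞) φ →
        (∀ t : ℝ, 1 ≤ t → φ t = 0) →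
        (∀ t : ℝ, |φ t| ≤ A) → (∀ t : ℝ, |deriv φ t| ≤ A') →
      ∀ (r : ℝ), 0 < r →
      ∀ (y : EuclideanSpace ℝ (Fin n)), y ≠ 0 →
        ‖fderiv ℝ
            (fun z : EuclideanSpace ℝ (Fin n) => φ (‖z‖ / r) * z j / ‖z‖ ^ (n + 1)) y‖
          ≤ B / ‖y‖ ^ (n + 1) := by
  refine ⟨(n + 2) * |A| + |A'| + 1, by positivity, ?_⟩
  intro j φ hφ hφ0 hφA hφA' r hr y hy
  have hN : (0:ℝ) < ‖y‖ := norm_pos_iff.2 hy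
  set N : ℝ := ‖y‖ with hNdef
  have hA : 0 ≤ A := le_trans (abs_nonneg _) (hφA 0)
  have hA' : 0 ≤ A' := le_trans (abs_nonneg _) (hφA' 0)
  -- derivative of the norm
  have hdn : DifferentiableAt ℝ (fun z : EuclideanSpace ℝ (Fin n) => ‖z‖) y :=
    ((contDiffAt_norm ℝ hy (n := 1)).differentiableAt one_ne_zero)
  set u : EuclideanSpace ℝ (Fin n) →L[ℝ] ℝ :=
    fderiv ℝ (fun z : EuclideanSpace ℝ (Fin n) => ‖z‖) y with hu_def
  have hnorm : HasFDerivAt (fun z : EuclideanSpace ℝ (Fin n) => ‖z‖) u y := hdn.hasFDerivAt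
  have hu : ‖u‖ ≤ 1 := by
    simpa using norm_fderiv_le_of_lipschitz ℝ
      (lipschitzWith_one_norm (E := EuclideanSpace ℝ (Fin n))) (x₀ := y)
  -- projection
  set P : EuclideanSpace ℝ (Fin n) →L[ℝ] ℝ := EuclideanSpace.proj j with hP_def
  have hG : HasFDerivAt (fun z : EuclideanSpace ℝ (Fin n) => z j) P y := P.hasFDerivAt
  have hcoord : ∀ z : EuclideanSpace ℝ (Fin n), ‖z j‖ ≤ ‖z‖ := by
    intro z
    rw [EuclideanSpace.norm_eq]
    have h1 : ‖z j‖ ^ 2 ≤ ∑ i, ‖z i‖ ^ 2 :=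
      Finset.single_le_sum (fun i _ => sq_nonneg ‖z i‖) (Finset.mem_univ j)
    calc ‖z j‖ = Real.sqrt (‖z j‖ ^ 2) := by rw [Real.sqrt_sq (norm_nonneg _)]
      _ ≤ Real.sqrt (∑ i, ‖z i‖ ^ 2) := Real.sqrt_le_sqrt h1
  have hP1 : ‖P‖ ≤ 1 := by
    refine ContinuousLinearMap.opNorm_le_bound _ zero_le_one fun z => ?_
    rw [one_mul]; exact hcoord z
  have hyj : |y j| ≤ N := hcoord y
  -- derivative of φ(‖z‖/r)
  set c1 : ℝ := deriv φ (N / r) * r⁻¹ with hc1_def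
  have hψ : HasDerivAt (fun t : ℝ => φ (t / r)) c1 N := by
    have h1 : HasDerivAt (fun t : ℝ => t / r) r⁻¹ N := by
      simpa [one_div] using (hasDerivAt_id N).div_const r
    have h2 : HasDerivAt φ (deriv φ (N / r)) (N / r) :=
      ((hφ.differentiable (by simp)) _).hasDerivAt
    simpa [Function.comp_def] using h2.comp N h1
  have hF : HasFDerivAt (fun z : EuclideanSpace ℝ (Fin n) => φ (‖z‖ / r)) (c1 • u) y :=
    HasDerivAt.comp_hasFDerivAt (h₂ := fun t : ℝ => φ (t / r))
      (f := fun z : EuclideanSpace ℝ (Fin n) => ‖z‖) y hψ hnorm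
  -- derivative of inverse power
  set c3 : ℝ := -(((n:ℝ) + 1) * N ^ n) / (N ^ (n + 1)) ^ 2 with hc3_def
  have hq : HasDerivAt (fun t : ℝ => (t ^ (n + 1))⁻¹) c3 N := by
    have h1 : HasDerivAt (fun t : ℝ => t ^ (n + 1)) ((↑(n + 1)) * N ^ n) N := by
      simpa using hasDerivAt_pow (n + 1) N
    have h2 : HasDerivAt (fun t : ℝ => (t ^ (n + 1))⁻¹) (-(↑(n + 1) * N ^ n) / (N ^ (n + 1)) ^ 2) N :=
      h1.inv (pow_ne_zero _ hN.ne')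
    convert h2 using 1
    rw [hc3_def]; push_cast; ring
  have hQ : HasFDerivAt (fun z : EuclideanSpace ℝ (Fin n) => (‖z‖ ^ (n + 1))⁻¹) (c3 • u) y :=
    HasDerivAt.comp_hasFDerivAt (h₂ := fun t : ℝ => (t ^ (n + 1))⁻¹)
      (f := fun z : EuclideanSpace ℝ (Fin n) => ‖z‖) y hq hnorm
  -- combine
  have hK : HasFDerivAt
      (fun z : EuclideanSpace ℝ (Fin n) => φ (‖z‖ / r) * z j / ‖z‖ ^ (n + 1))
      ((φ (N / r) * y j) • (c3 • u)
        + (N ^ (n + 1))⁻¹ • (φ (N / r) • P + y j • (c1 • u))) y := by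
    have := (hF.mul hG).mul hQ
    exact this.congr_of_eventuallyEq
      (Filter.Eventually.of_forall fun z => by simp only [Pi.mul_apply, div_eq_mul_inv])
  rw [hK.fderiv]
  -- bound c1
  have hc1 : |c1| ≤ A' / N := by
    rcases le_or_gt N r with h | h
    · have h0 : |c1| ≤ A' * r⁻¹ := by
        rw [hc1_def, abs_mul, abs_of_nonneg (by positivity : (0:ℝ) ≤ r⁻¹)]
        exact mul_le_mul_of_nonneg_right (hφA' _) (by positivity)
      refine h0.trans ?_
      rw [div_eq_mul_inv]
      exact mul_le_mul_of_nonneg_left (inv_anti₀ hN h) hA'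
    · have h1 : (1:ℝ) < N / r := (one_lt_div hr).2 h
      have hd0 : deriv φ (N / r) = 0 := by
        have hev : φ =ᶠ[nhds (N / r)] fun _ => (0:ℝ) := by
          filter_upwards [Ioi_mem_nhds h1] with t ht
          exact hφ0 t (le_of_lt ht)
        rw [hev.deriv_eq]; simp
      rw [hc1_def, hd0]
      simp
      positivity
  -- bound c3
  have hc3 : |c3| = ((n:ℝ) + 1) / N ^ (n + 2) := by
    have h0 : c3 = -(((n:ℝ) + 1) / N ^ (n + 2)) := by
      rw [hc3_def]; field_simp; ring
    rw [h0, abs_neg, abs_of_nonneg (by positivity)]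
  -- final bound
  have hφv : |φ (N / r)| ≤ A := hφA _
  have hc3' : ‖c3‖ ≤ ((n:ℝ) + 1) / N ^ (n + 2) := by rw [Real.norm_eq_abs, hc3]
  have hc1' : ‖c1‖ ≤ A' / N := by rw [Real.norm_eq_abs]; exact hc1
  have hc3u : ‖c3 • u‖ ≤ ((n:ℝ) + 1) / N ^ (n + 2) := by
    calc ‖c3 • u‖ ≤ ‖c3‖ * ‖u‖ := ContinuousLinearMap.opNorm_smul_le _ _
      _ ≤ (((n:ℝ) + 1) / N ^ (n + 2)) * 1 :=
          mul_le_mul hc3' hu (norm_nonneg _) (by positivity)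
      _ = ((n:ℝ) + 1) / N ^ (n + 2) := mul_one _
  have hc1u : ‖c1 • u‖ ≤ A' / N := by
    calc ‖c1 • u‖ ≤ ‖c1‖ * ‖u‖ := ContinuousLinearMap.opNorm_smul_le _ _
      _ ≤ (A' / N) * 1 := mul_le_mul hc1' hu (norm_nonneg _) (by positivity)
      _ = A' / N := mul_one _
  have t1 : ‖(φ (N / r) * y j) • (c3 • u)‖ ≤ (A * N) * (((n:ℝ) + 1) / N ^ (n + 2)) := by
    calc ‖(φ (N / r) * y j) • (c3 • u)‖ ≤ ‖φ (N / r) * y j‖ * ‖c3 • u‖ := ContinuousLinearMap.opNorm_smul_le _ _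
      _ ≤ (A * N) * (((n:ℝ) + 1) / N ^ (n + 2)) := by
          refine mul_le_mul ?_ hc3u (norm_nonneg _) (by positivity)
          rw [Real.norm_eq_abs, abs_mul]
          exact mul_le_mul hφv hyj (abs_nonneg _) hA
  have hinner : ‖φ (N / r) • P + y j • (c1 • u)‖ ≤ A + A' := by
    refine (norm_add_le _ _).trans (add_le_add ?_ ?_)
    · calc ‖φ (N / r) • P‖ ≤ ‖φ (N / r)‖ * ‖P‖ := ContinuousLinearMap.opNorm_smul_le _ _
        _ ≤ A * 1 := mul_le_mul (by rw [Real.norm_eq_abs]; exact hφv) hP1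
              (norm_nonneg _) hA
        _ = A := mul_one _
    · calc ‖y j • (c1 • u)‖ ≤ ‖y j‖ * ‖c1 • u‖ := ContinuousLinearMap.opNorm_smul_le _ _
        _ ≤ N * (A' / N) := mul_le_mul (hcoord y) hc1u (norm_nonneg _) hN.le
        _ = A' := by field_simp
  have t2 : ‖(N ^ (n + 1))⁻¹ • (φ (N / r) • P + y j • (c1 • u))‖
      ≤ (N ^ (n + 1))⁻¹ * (A + A') := by
    calc ‖(N ^ (n + 1))⁻¹ • (φ (N / r) • P + y j • (c1 • u))‖
        ≤ ‖(N ^ (n + 1))⁻¹‖ * ‖φ (N / r) • P + y j • (c1 • u)‖ := ContinuousLinearMap.opNorm_smul_le _ _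
      _ ≤ (N ^ (n + 1))⁻¹ * (A + A') := by
          rw [Real.norm_eq_abs, abs_of_nonneg (by positivity : (0:ℝ) ≤ (N ^ (n + 1))⁻¹)]
          exact mul_le_mul_of_nonneg_left hinner (by positivity)
  refine (norm_add_le _ _).trans ((add_le_add t1 t2).trans ?_)
  have h1 : (A * N) * (((n:ℝ) + 1) / N ^ (n + 2)) = (A * ((n:ℝ) + 1)) / N ^ (n + 1) := by
    field_simp
    ring
  have h2 : (N ^ (n + 1))⁻¹ * (A + A') = (A + A') / N ^ (n + 1) := by
    rw [inv_mul_eq_div]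
  rw [h1, h2, ← add_div]
  gcongr ?_ / _
  nlinarith [le_abs_self A, le_abs_self A', abs_nonneg A, abs_nonneg A',
    mul_nonneg (sub_nonneg.2 (le_abs_self A)) (Nat.cast_nonneg n : (0:ℝ) ≤ n)]
end

section
/- Let (X, d) be a metric space equipped with a finite Borel measure μ, let ψ be a cutoff function, let x ∈ X, and let 0 < s ≤ r < 2s. Suppose there is c > 0 such that ψ_r(x) ≥ c and ψ_s(x) ≥ c, where ψ_t(x) := ∫_X ψ(d(x,z)/t) dμ(z). Then for every integrable u : X → ℝ^ν and every vector b ∈ ℝ^ν, one has ‖(ψ_r ∗ u)(x) − (ψ_s ∗ u)(x)‖ ≤ C · (r/s − 1) · (1/μ(B(x,r))) ∫_{B(x,r)} ‖u(z) − b‖ dμ(z), where C depends only on Lip(ψ), c and μ(X). -/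
open MeasureTheory Metric

/-! Write `g`, `h` for the weights `ψ (d(x,·)/r)` and `ψ (d(x,·)/s)`. Both vanish off
`B = B(x,r)` and, by the Lipschitz bound on `ψ`, differ by at most `δ = L (r/s - 1)`.
Subtracting `b` from `u` changes neither average, and
`(∫g)⁻¹ ∫ g u - (∫h)⁻¹ ∫ h u = (∫g)⁻¹ ∫ (g - h) u + ((∫g)⁻¹ - (∫h)⁻¹) ∫ h u`,
where the first term is at most `δ/c ∫_B ‖u‖` and the second at most `δ μ(B)/c² ∫_B ‖u‖`,
since `|∫g - ∫h| ≤ δ μ(B)` and `∫g, ∫h ≥ c`. Finally `c ≤ μ(B) ≤ μ(X)` turns the integral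
over `B` into the average over `B` at the cost of a constant depending on `L`, `c`, `μ(X)`. -/

noncomputable def weightedAverage {X E : Type*} [MeasurableSpace X] [NormedAddCommGroup E]
    [NormedSpace ℝ E] (μ : Measure X) (g : X → ℝ) (u : X → E) : E :=
  (∫ z, g z ∂μ)⁻¹ • ∫ z, g z • u z ∂μ

lemma abs_inv_sub_inv_le {a b c : ℝ} (hc : 0 < c) (ha : c ≤ a) (hb : c ≤ b) :
    |a⁻¹ - b⁻¹| ≤ |a - b| / c ^ 2 := by
  have ha' : 0 < a := hc.trans_le ha
  have hb' : 0 < b := hc.trans_le hb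
  rw [inv_sub_inv ha'.ne' hb'.ne', abs_div, abs_sub_comm, abs_of_pos (mul_pos ha' hb'), sq]
  gcongr

section WeightedAverage

variable {X E : Type*} [MeasurableSpace X] [NormedAddCommGroup E] [NormedSpace ℝ E]
  {μ : Measure X}

lemma norm_integral_le_setIntegral_of_eq_zero_off {f : X → E} {F : X → ℝ} {B : Set X}
    (hB : MeasurableSet B) (hf : ∀ z ∉ B, f z = 0) (hF : IntegrableOn F B μ)
    (hfF : ∀ z ∈ B, ‖f z‖ ≤ F z) : ‖∫ z, f z ∂μ‖ ≤ ∫ z in B, F z ∂μ := by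
  rw [← setIntegral_eq_integral_of_forall_compl_eq_zero hf]
  exact norm_integral_le_of_norm_le hF (ae_restrict_of_forall_mem hB hfF)

lemma integral_le_measureReal_of_eq_zero_off [IsFiniteMeasure μ] {g : X → ℝ} {B : Set X}
    (hB : MeasurableSet B) (hg1 : ∀ z, ‖g z‖ ≤ 1) (hgB : ∀ z ∉ B, g z = 0) :
    ∫ z, g z ∂μ ≤ μ.real B := by
  have h := norm_integral_le_setIntegral_of_eq_zero_off (μ := μ) hB hgB integrableOn_const
    fun z _ => hg1 z
  rw [setIntegral_const, smul_eq_mul, mul_one] at h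
  exact (Real.le_norm_self _).trans h

lemma weightedAverage_sub_const [CompleteSpace E] {g : X → ℝ} {u : X → E}
    (hg : Integrable g μ) (hgu : Integrable (fun z => g z • u z) μ) (hg0 : ∫ z, g z ∂μ ≠ 0)
    (b : E) : weightedAverage μ g (fun z => u z - b) = weightedAverage μ g u - b := by
  have hsplit : ∫ z, g z • (u z - b) ∂μ = ∫ z, g z • u z ∂μ - (∫ z, g z ∂μ) • b := by
    simp only [smul_sub]
    rw [integral_sub hgu (hg.smul_const b), integral_smul_const]
  rw [weightedAverage, weightedAverage, hsplit, smul_sub, smul_smul, inv_mul_cancel₀ hg0,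
    one_smul]

variable [IsFiniteMeasure μ] {g h : X → ℝ} {u : X → E} {B : Set X} {c δ : ℝ}

lemma norm_weightedAverage_sub_weightedAverage_le (hB : MeasurableSet B) (hc : 0 < c)
    (hδ : 0 ≤ δ) (hu : Integrable u μ)
    (hg : AEStronglyMeasurable g μ) (hh : AEStronglyMeasurable h μ)
    (hg1 : ∀ z, ‖g z‖ ≤ 1) (hh1 : ∀ z, ‖h z‖ ≤ 1)
    (hgB : ∀ z ∉ B, g z = 0) (hhB : ∀ z ∉ B, h z = 0) (hgh : ∀ z ∈ B, |g z - h z| ≤ δ)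
    (hcg : c ≤ ∫ z, g z ∂μ) (hch : c ≤ ∫ z, h z ∂μ) :
    ‖weightedAverage μ g u - weightedAverage μ h u‖
      ≤ (δ / c + δ * μ.real B / c ^ 2) * ∫ z in B, ‖u z‖ ∂μ := by
  simp only [weightedAverage]
  set G := ∫ z, g z ∂μ
  set H := ∫ z, h z ∂μ
  set I := ∫ z in B, ‖u z‖ ∂μ
  have hG : 0 < G := hc.trans_le hcg
  have hI : 0 ≤ I := setIntegral_nonneg hB fun z _ => norm_nonneg _
  have hgu : Integrable (fun z => g z • u z) μ := hu.bdd_smul 1 hg (.of_forall hg1)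
  have hhu : Integrable (fun z => h z • u z) μ := hu.bdd_smul 1 hh (.of_forall hh1)
  have hdecomp : G⁻¹ • ∫ z, g z • u z ∂μ - H⁻¹ • ∫ z, h z • u z ∂μ
      = G⁻¹ • ∫ z, (g z - h z) • u z ∂μ + (G⁻¹ - H⁻¹) • ∫ z, h z • u z ∂μ := by
    simp only [sub_smul]
    rw [integral_sub hgu hhu, smul_sub]
    abel
  have hmass : |G - H| ≤ δ * μ.real B := by
    rw [← integral_sub (.of_bound hg 1 (.of_forall hg1)) (.of_bound hh 1 (.of_forall hh1)),
      ← Real.norm_eq_abs, mul_comm, ← smul_eq_mul, ← setIntegral_const]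
    refine norm_integral_le_setIntegral_of_eq_zero_off hB (fun z hz => ?_) integrableOn_const hgh
    simp [hgB z hz, hhB z hz]
  have hdiff : ‖∫ z, (g z - h z) • u z ∂μ‖ ≤ δ * I := by
    rw [← integral_const_mul]
    refine norm_integral_le_setIntegral_of_eq_zero_off hB (fun z hz => ?_)
      (hu.norm.const_mul δ).integrableOn fun z hz => ?_
    · simp [hgB z hz, hhB z hz]
    · rw [norm_smul, Real.norm_eq_abs]
      exact mul_le_mul_of_nonneg_right (hgh z hz) (norm_nonneg _)
  have hhu_le : ‖∫ z, h z • u z ∂μ‖ ≤ I := by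
    refine norm_integral_le_setIntegral_of_eq_zero_off hB (fun z hz => ?_)
      hu.norm.integrableOn fun z _ => ?_
    · simp [hhB z hz]
    · rw [norm_smul]
      exact mul_le_of_le_one_left (norm_nonneg _) (hh1 z)
  have hinv : |G⁻¹ - H⁻¹| ≤ δ * μ.real B / c ^ 2 :=
    (abs_inv_sub_inv_le hc hcg hch).trans (by gcongr)
  calc ‖G⁻¹ • ∫ z, g z • u z ∂μ - H⁻¹ • ∫ z, h z • u z ∂μ‖
      ≤ G⁻¹ * ‖∫ z, (g z - h z) • u z ∂μ‖ + |G⁻¹ - H⁻¹| * ‖∫ z, h z • u z ∂μ‖ := by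
        rw [hdecomp]
        refine (norm_add_le _ _).trans_eq ?_
        rw [norm_smul, norm_smul, Real.norm_eq_abs, Real.norm_eq_abs, abs_of_pos (inv_pos.2 hG)]
    _ ≤ c⁻¹ * (δ * I) + δ * μ.real B / c ^ 2 * I := by gcongr
    _ = (δ / c + δ * μ.real B / c ^ 2) * I := by ring

lemma norm_weightedAverage_sub_weightedAverage_le_setIntegral_norm_sub [CompleteSpace E]
    (hB : MeasurableSet B) (hc : 0 < c) (hδ : 0 ≤ δ) (hu : Integrable u μ)
    (hg : AEStronglyMeasurable g μ) (hh : AEStronglyMeasurable h μ)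
    (hg1 : ∀ z, ‖g z‖ ≤ 1) (hh1 : ∀ z, ‖h z‖ ≤ 1)
    (hgB : ∀ z ∉ B, g z = 0) (hhB : ∀ z ∉ B, h z = 0) (hgh : ∀ z ∈ B, |g z - h z| ≤ δ)
    (hcg : c ≤ ∫ z, g z ∂μ) (hch : c ≤ ∫ z, h z ∂μ) (b : E) :
    ‖weightedAverage μ g u - weightedAverage μ h u‖
      ≤ (δ / c + δ * μ.real B / c ^ 2) * ∫ z in B, ‖u z - b‖ ∂μ := by
  have key := norm_weightedAverage_sub_weightedAverage_le (u := fun z => u z - b) hB hc hδ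
    (hu.sub (integrable_const b))
    hg hh hg1 hh1 hgB hhB hgh hcg hch
  rwa [weightedAverage_sub_const (.of_bound hg 1 (.of_forall hg1))
      (hu.bdd_smul 1 hg (.of_forall hg1)) (hc.trans_le hcg).ne',
    weightedAverage_sub_const (.of_bound hh 1 (.of_forall hh1))
      (hu.bdd_smul 1 hh (.of_forall hh1)) (hc.trans_le hch).ne',
    sub_sub_sub_cancel_right] at key

end WeightedAverage

section Cutoff

variable {ψ : ℝ → ℝ}

lemma cutoff_div_eq_zero (hψ1 : ∀ t : ℝ, 1 ≤ t → ψ t = 0) {d t : ℝ} (ht : 0 < t) (htd : t ≤ d) :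
    ψ (d / t) = 0 :=
  hψ1 _ ((one_le_div ht).2 htd)

lemma norm_cutoff_le_one (hψ01 : ∀ t : ℝ, 0 ≤ t → ψ t ∈ Set.Icc (0 : ℝ) 1) {t : ℝ}
    (ht : 0 ≤ t) : ‖ψ t‖ ≤ 1 := by
  obtain ⟨h0, h1⟩ := hψ01 t ht
  rwa [Real.norm_eq_abs, abs_of_nonneg h0]

lemma cutoff_dist_div_eq_zero_of_notMem_ball {X : Type*} [PseudoMetricSpace X]
    (hψ1 : ∀ t : ℝ, 1 ≤ t → ψ t = 0) {x z : X} {r t : ℝ} (ht : 0 < t) (htr : t ≤ r)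
    (hz : z ∉ ball x r) : ψ (dist x z / t) = 0 :=
  cutoff_div_eq_zero hψ1 ht (htr.trans (by simpa [dist_comm] using hz))

lemma continuous_cutoff_dist_div {X : Type*} [PseudoMetricSpace X]
    (hψ : ContinuousOn ψ (Set.Ici 0)) (x : X) {t : ℝ} (ht : 0 ≤ t) :
    Continuous fun z => ψ (dist x z / t) :=
  hψ.comp_continuous ((continuous_const.dist continuous_id).div_const t)
    fun _ => Set.mem_Ici.2 (by positivity)

lemma abs_cutoff_div_sub_cutoff_div_le {L : NNReal} (hLip : LipschitzOnWith L ψ (Set.Ici 0))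
    (hψ1 : ∀ t : ℝ, 1 ≤ t → ψ t = 0) {d r s : ℝ} (hd : 0 ≤ d) (hs : 0 < s) (hsr : s ≤ r) :
    |ψ (d / r) - ψ (d / s)| ≤ L * (r / s - 1) := by
  have hr : 0 < r := hs.trans_le hsr
  have hε : 0 ≤ r / s - 1 := sub_nonneg.2 ((one_le_div hs).2 hsr)
  rcases lt_or_ge d r with hdr | hrd
  · have hlip := hLip.dist_le_mul (d / r) (Set.mem_Ici.2 (by positivity))
      (d / s) (Set.mem_Ici.2 (by positivity))
    rw [Real.dist_eq, Real.dist_eq] at hlip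
    refine hlip.trans (mul_le_mul_of_nonneg_left ?_ L.coe_nonneg)
    have hds : d / r ≤ d / s := div_le_div_of_nonneg_left hd hs hsr
    calc |d / r - d / s| = d * (1 / s - 1 / r) := by
          rw [abs_of_nonpos (sub_nonpos.2 hds)]; ring
      _ ≤ r * (1 / s - 1 / r) := by
          gcongr
          exact sub_nonneg.2 (one_div_le_one_div_of_le hs hsr)
      _ = r / s - 1 := by field_simp
  · rw [cutoff_div_eq_zero hψ1 hr hrd, cutoff_div_eq_zero hψ1 hs (hsr.trans hrd), sub_zero,
      abs_zero]
    exact mul_nonneg L.coe_nonneg hε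

end Cutoff

/-- On a metric space with finite Borel measure (total mass `V`), if `ψ` is a
cutoff function with Lipschitz constant `L`, `x ∈ X`, `0 < s ≤ r < 2s`, and
`ψ_r(x), ψ_s(x) ≥ c > 0`, then for every integrable `u : X → ℝ^ν` and every `b ∈ ℝ^ν`,
`‖(ψ_r ∗ u)(x) − (ψ_s ∗ u)(x)‖ ≤ C · (r/s − 1) · (1/μ(B(x,r))) ∫_{B(x,r)} ‖u − b‖ dμ`,
with `C` depending only on `L`, `c` and `μ(X) = V`. -/
theorem stmt_5 (L : NNReal) (c : ℝ) (V : ENNReal) (hc : 0 < c) (hV : V ≠ ⊤) :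
    ∃ C : ℝ, 0 < C ∧
      ∀ (X : Type) [MetricSpace X] [MeasurableSpace X] [BorelSpace X]
        (μ : Measure X), μ Set.univ = V →
      ∀ (ψ : ℝ → ℝ), LipschitzOnWith L ψ (Set.Ici 0) →
        (∀ t : ℝ, 0 ≤ t → ψ t ∈ Set.Icc (0 : ℝ) 1) →
        (∀ t : ℝ, 1 ≤ t → ψ t = 0) →
      ∀ (x : X) (r s : ℝ), 0 < s → s ≤ r → r < 2 * s →
        c ≤ (∫ z, ψ (dist x z / r) ∂μ) →
        c ≤ (∫ z, ψ (dist x z / s) ∂μ) →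
      ∀ (ν : ℕ) (u : X → EuclideanSpace ℝ (Fin ν)), Integrable u μ →
      ∀ b : EuclideanSpace ℝ (Fin ν),
        ‖((∫ z, ψ (dist x z / r) ∂μ)⁻¹ • ∫ z, ψ (dist x z / r) • u z ∂μ)
            - ((∫ z, ψ (dist x z / s) ∂μ)⁻¹ • ∫ z, ψ (dist x z / s) • u z ∂μ)‖
          ≤ C * (r / s - 1) *
            (((μ (ball x r)).toReal)⁻¹ * ∫ z in ball x r, ‖u z - b‖ ∂μ) := by
  refine ⟨L * V.toReal / c * (1 + V.toReal / c) + 1, by positivity, ?_⟩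
  intro X _ _ _ μ hμ ψ hLip hψ01 hψ1 x r s hs hsr _ hcr hcs ν u hu b
  have : IsFiniteMeasure μ := ⟨hμ ▸ hV.lt_top⟩
  have hr : 0 < r := hs.trans_le hsr
  have hε : 0 ≤ r / s - 1 := sub_nonneg.2 ((one_le_div hs).2 hsr)
  have hm : c ≤ μ.real (ball x r) := hcr.trans <| integral_le_measureReal_of_eq_zero_off
    measurableSet_ball (fun z => norm_cutoff_le_one hψ01 (by positivity))
    fun z => cutoff_dist_div_eq_zero_of_notMem_ball hψ1 hr le_rfl
  have hmV : μ.real (ball x r) ≤ V.toReal := hμ ▸ measureReal_mono (Set.subset_univ _)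
  have key := norm_weightedAverage_sub_weightedAverage_le_setIntegral_norm_sub
    measurableSet_ball hc (mul_nonneg L.coe_nonneg hε) hu
    (continuous_cutoff_dist_div hLip.continuousOn x hr.le).aestronglyMeasurable
    (continuous_cutoff_dist_div hLip.continuousOn x hs.le).aestronglyMeasurable
    (fun z => norm_cutoff_le_one hψ01 (by positivity))
    (fun z => norm_cutoff_le_one hψ01 (by positivity))
    (fun z => cutoff_dist_div_eq_zero_of_notMem_ball hψ1 hr le_rfl)
    (fun z => cutoff_dist_div_eq_zero_of_notMem_ball hψ1 hs hsr)
    (fun z _ => abs_cutoff_div_sub_cutoff_div_le hLip hψ1 dist_nonneg hs hsr) hcr hcs b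
  rw [← measureReal_def]
  set m := μ.real (ball x r)
  set I := ∫ z in ball x r, ‖u z - b‖ ∂μ
  have hm0 : 0 < m := hc.trans_le hm
  have hI : 0 ≤ I := setIntegral_nonneg measurableSet_ball fun z _ => norm_nonneg _
  calc ‖_‖ ≤ (L * (r / s - 1) / c + L * (r / s - 1) * m / c ^ 2) * I := key
    _ = L * m / c * (1 + m / c) * (r / s - 1) * (m⁻¹ * I) := by field_simp
    _ ≤ (L * V.toReal / c * (1 + V.toReal / c) + 1) * (r / s - 1) * (m⁻¹ * I) := by
        gcongr
        calc L * m / c * (1 + m / c) ≤ L * V.toReal / c * (1 + V.toReal / c) := by gcongr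
          _ ≤ _ := le_add_of_nonneg_right zero_le_one
end

section
/- Let (Ω, μ) be a measure space with 0 < μ(Ω) < ∞, let N ⊆ ℝ^ν be a nonempty closed set, and let u : Ω → ℝ^ν be integrable with u(ω) ∈ N for μ-almost every ω. Then the distance from the average value of u to N satisfies dist( (1/μ(Ω)) ∫_Ω u dμ , N ) ≤ (1/μ(Ω)²) ∫_Ω ∫_Ω ‖u(z) − u(w)‖ dμ(z) dμ(w). -/
/-! For almost every `z` the value `u z` lies in `N`, so `dist(⨍ u, N) ≤ ‖u z - ⨍ u‖`, and by
Jensen's inequality for the norm `‖u z - ⨍ u‖ ≤ ⨍ w, ‖u z - u w‖`. Averaging over `z` gives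
the bound. -/

open MeasureTheory Metric

namespace MeasureTheory

variable {α : Type*} [MeasurableSpace α] {μ : Measure α}

theorem average_mono_ae {f g : α → ℝ} (hf : Integrable f μ) (hg : Integrable g μ)
    (h : f ≤ᵐ[μ] g) : ⨍ x, f x ∂μ ≤ ⨍ x, g x ∂μ := by
  simp only [average_eq, smul_eq_mul]
  exact mul_le_mul_of_nonneg_left (integral_mono_ae hf hg h) (by positivity)

theorem average_average_eq (f : α → α → ℝ) :
    ⨍ z, ⨍ w, f z w ∂μ ∂μ = (μ.real Set.univ ^ 2)⁻¹ * ∫ z, ∫ w, f z w ∂μ ∂μ := by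
  simp only [average_eq, smul_eq_mul, integral_const_mul]
  ring

variable [IsFiniteMeasure μ] {E : Type*} [NormedAddCommGroup E]

theorem integrable_average_norm_sub {u : α → E} (hu : Integrable u μ) :
    Integrable (fun z ↦ ⨍ w, ‖u z - u w‖ ∂μ) μ := by
  simp only [average_eq, smul_eq_mul]
  exact ((hu.comp_fst μ).sub (hu.comp_snd μ)).integral_norm_prod_left.const_mul _

variable [NeZero μ]

theorem infDist_le_average_dist {X : Type*} [PseudoMetricSpace X] {u : α → X} {N : Set X}
    (x : X) (hu : Integrable (fun z ↦ dist (u z) x) μ) (huN : ∀ᵐ z ∂μ, u z ∈ N) :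
    infDist x N ≤ ⨍ z, dist (u z) x ∂μ := by
  calc infDist x N = ⨍ _, infDist x N ∂μ := (average_const μ _).symm
    _ ≤ ⨍ z, dist (u z) x ∂μ := by
      refine average_mono_ae (integrable_const _) hu ?_
      filter_upwards [huN] with z hz
      rw [dist_comm]
      exact infDist_le_dist_of_mem hz

variable [NormedSpace ℝ E] [CompleteSpace E]

theorem norm_sub_average_le {u : α → E} (hu : Integrable u μ) (x : E) :
    ‖x - ⨍ w, u w ∂μ‖ ≤ ⨍ w, ‖x - u w‖ ∂μ := by
  have hsub : x - ⨍ w, u w ∂μ = ⨍ w, (x - u w) ∂μ := by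
    rw [average_eq', average_eq', integral_sub (integrable_const x) hu.to_average, integral_const,
      probReal_univ, one_smul]
  rw [hsub, average_eq', average_eq']
  exact norm_integral_le_integral_norm _

theorem infDist_average_le_average_average_norm_sub {u : α → E} {N : Set E}
    (hu : Integrable u μ) (huN : ∀ᵐ z ∂μ, u z ∈ N) :
    infDist (⨍ w, u w ∂μ) N ≤ ⨍ z, ⨍ w, ‖u z - u w‖ ∂μ ∂μ := by
  have hdist : Integrable (fun z ↦ dist (u z) (⨍ w, u w ∂μ)) μ := by
    simpa only [dist_eq_norm, Pi.sub_apply] using (hu.sub (integrable_const (⨍ w, u w ∂μ))).norm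
  calc infDist (⨍ w, u w ∂μ) N ≤ ⨍ z, dist (u z) (⨍ w, u w ∂μ) ∂μ :=
        infDist_le_average_dist _ hdist huN
    _ ≤ ⨍ z, ⨍ w, ‖u z - u w‖ ∂μ ∂μ :=
        average_mono_ae hdist (integrable_average_norm_sub hu) <|
          .of_forall fun z ↦ (dist_eq_norm _ _).trans_le (norm_sub_average_le hu (u z))

end MeasureTheory

theorem stmt_7_general {Ω : Type*} [MeasurableSpace Ω] (μ : Measure Ω)
    (hμ0 : 0 < μ Set.univ) (hμtop : μ Set.univ ≠ ⊤)
    (ν : ℕ) (N : Set (EuclideanSpace ℝ (Fin ν)))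
    (u : Ω → EuclideanSpace ℝ (Fin ν)) (hu : Integrable u μ)
    (huN : ∀ᵐ ω ∂μ, u ω ∈ N) :
    Metric.infDist (((μ Set.univ).toReal)⁻¹ • ∫ ω, u ω ∂μ) N
      ≤ (((μ Set.univ).toReal) ^ 2)⁻¹ * ∫ z, (∫ w, ‖u z - u w‖ ∂μ) ∂μ := by
  have : IsFiniteMeasure μ := ⟨hμtop.lt_top⟩
  have : NeZero μ := ⟨Measure.measure_univ_ne_zero.mp hμ0.ne'⟩
  have h := infDist_average_le_average_average_norm_sub hu huN
  rwa [average_average_eq, average_eq, measureReal_def] at h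

/-- If `(Ω, μ)` is a measure space with `0 < μ(Ω) < ∞`, `N ⊆ ℝ^ν` is nonempty and
closed, and `u : Ω → ℝ^ν` is integrable with `u(ω) ∈ N` a.e., then
`dist( (1/μ(Ω)) ∫ u dμ , N ) ≤ (1/μ(Ω)²) ∫∫ ‖u(z) − u(w)‖ dμ(z) dμ(w)`. -/
theorem stmt_7 {Ω : Type*} [MeasurableSpace Ω] (μ : Measure Ω)
    (hμ0 : 0 < μ Set.univ) (hμtop : μ Set.univ ≠ ⊤)
    (ν : ℕ) (N : Set (EuclideanSpace ℝ (Fin ν))) (hN : N.Nonempty) (hNc : IsClosed N)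
    (u : Ω → EuclideanSpace ℝ (Fin ν)) (hu : Integrable u μ)
    (huN : ∀ᵐ ω ∂μ, u ω ∈ N) :
    Metric.infDist (((μ Set.univ).toReal)⁻¹ • ∫ ω, u ω ∂μ) N
      ≤ (((μ Set.univ).toReal) ^ 2)⁻¹ * ∫ z, (∫ w, ‖u z - u w‖ ∂μ) ∂μ :=
  stmt_7_general μ hμ0 hμtop ν N u hu huN
end

section
/- Let n ≥ 1 be an integer, let ψ be a cutoff function with ∫_{ℝⁿ} ψ(|w|) dw > 0, let N ⊆ ℝ^ν be a nonempty closed set, and let u : ℝⁿ → ℝ^ν be continuously differentiable with u(z) ∈ N for all z. Then there is a constant C, depending only on n and ψ, such that for every x ∈ ℝⁿ and every r > 0, dist( (ψ_r ∗ u)(x), N ) ≤ C ( ∫_{B(x,r)} ‖Du(z)‖ⁿ dz )^{1/n}, where ψ_r ∗ u is the normalized mollification of u at scale r and Du(z) the derivative of u at z. -/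
/-!
Let `K = ∫ ψ_r` and `ū = (ψ_r ∗ u)(x)`. As `u y ∈ N`,
`dist(ū, N) ≤ ‖ū - u y‖ ≤ K⁻¹ ∫_B ‖u z - u y‖ dz` for every `y`, and averaging in `y` against
`ψ_r` gives `dist(ū, N) ≤ K⁻² ∫_B ∫_B ‖u z - u y‖`. Going from `y` and from `z` to their midpoint
and integrating `Du` along the two half-segments bounds the double integral by
`2ⁿ⁺¹ r |B| ∫_B ‖Du‖`; Hölder gives `∫_B ‖Du‖ ≤ (∫_B ‖Du‖ⁿ)^{1/n} |B|^{1-1/n}`. Since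
`K = rⁿ ∫ ψ(|w|) dw` and `|B| = rⁿ |B₁|`, the exponent `n` is exactly the one for which all
powers of `r` cancel.
-/

open MeasureTheory Metric Module

section WeightedAverage

variable {α F : Type*} [MeasurableSpace α] {μ : Measure α} [NormedAddCommGroup F]

theorem integral_mul_infDist_le {w : α → ℝ} {u : α → F} {N : Set F} (v : F)
    (hw0 : 0 ≤ w) (hw : Integrable w μ) (huN : ∀ y, u y ∈ N)
    (hint : Integrable (fun y => w y * ‖v - u y‖) μ) :
    (∫ y, w y ∂μ) * infDist v N ≤ ∫ y, w y * ‖v - u y‖ ∂μ := by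
  rw [← integral_mul_const]
  refine integral_mono (hw.mul_const _) hint fun y => mul_le_mul_of_nonneg_left ?_ (hw0 y)
  rw [← dist_eq_norm]
  exact infDist_le_dist_of_mem (huN y)

theorem norm_average_sub_le [NormedSpace ℝ F] [CompleteSpace F] {w : α → ℝ} {u : α → F} (a : F)
    (hw0 : 0 ≤ w) (hw : Integrable w μ) (hwu : Integrable (fun z => w z • u z) μ)
    (hK : 0 < ∫ z, w z ∂μ) :
    ‖(∫ z, w z ∂μ)⁻¹ • ∫ z, w z • u z ∂μ - a‖
      ≤ (∫ z, w z ∂μ)⁻¹ * ∫ z, w z * ‖u z - a‖ ∂μ := by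
  have hsub : (∫ z, w z ∂μ)⁻¹ • ∫ z, w z • u z ∂μ - a
      = (∫ z, w z ∂μ)⁻¹ • ∫ z, w z • (u z - a) ∂μ := by
    simp_rw [smul_sub]
    rw [integral_sub hwu (hw.smul_const a), integral_smul_const, smul_sub, smul_smul,
      inv_mul_cancel₀ hK.ne', one_smul]
  rw [hsub, norm_smul, Real.norm_of_nonneg (inv_nonneg.2 hK.le)]
  gcongr
  refine (norm_integral_le_integral_norm _).trans_eq (integral_congr_ae ?_)
  filter_upwards with z
  rw [norm_smul, Real.norm_of_nonneg (hw0 z)]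

theorem integral_mul_le_setIntegral_of_le {w f g : α → ℝ} {s : Set α} (hs : MeasurableSet s)
    (hw0 : 0 ≤ w) (hws : w ≤ s.indicator 1) (hf0 : ∀ y ∈ s, 0 ≤ f y)
    (hfg : ∀ y ∈ s, f y ≤ g y) (hg : IntegrableOn g s μ) :
    ∫ y, w y * f y ∂μ ≤ ∫ y in s, g y ∂μ := by
  have hw_out : ∀ y ∉ s, w y = 0 := fun y hy =>
    le_antisymm (by simpa [hy] using hws y) (hw0 y)
  rw [← integral_indicator hs]
  refine integral_mono_of_nonneg (.of_forall fun y => ?_) (hg.integrable_indicator hs)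
    (.of_forall fun y => ?_)
  · by_cases hy : y ∈ s
    · exact mul_nonneg (hw0 y) (hf0 y hy)
    · simp [hw_out y hy]
  · by_cases hy : y ∈ s
    · simpa [hy] using (mul_le_of_le_one_left (hf0 y hy) (by simpa [hy] using hws y)).trans
        (hfg y hy)
    · simp [hw_out y hy, hy]

theorem setIntegral_le_rpow_mul_measureReal {g : α → ℝ} {s : Set α} {p : ℝ} (hp : 1 ≤ p)
    (hg0 : ∀ z ∈ s, 0 ≤ g z) (hs : MeasurableSet s) (hμs : μ s ≠ ⊤)
    (hg : MemLp g (ENNReal.ofReal p) (μ.restrict s)) :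
    ∫ z in s, g z ∂μ ≤ (∫ z in s, g z ^ p ∂μ) ^ (1 / p) * μ.real s ^ ((p - 1) / p) := by
  rcases hp.eq_or_lt with rfl | hp
  · simp
  have : IsFiniteMeasure (μ.restrict s) := isFiniteMeasure_restrict.2 hμs
  have h := integral_mul_le_Lp_mul_Lq_of_nonneg (Real.HolderConjugate.conjExponent hp)
    ((ae_restrict_iff' hs).2 (.of_forall hg0)) (.of_forall fun _ => zero_le_one) hg
    (memLp_const 1)
  simp only [mul_one, Real.one_rpow, integral_const, smul_eq_mul,
    measureReal_restrict_apply_univ] at h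
  refine h.trans_eq ?_
  congr 2
  rw [Real.conjExponent]
  field_simp

end WeightedAverage

section ProperSpace

variable {X Y : Type*} [PseudoMetricSpace X] [ProperSpace X] [MeasurableSpace X] [BorelSpace X]
  [PseudoMetricSpace Y] [ProperSpace Y] [MeasurableSpace Y] [BorelSpace Y]
  {μ : Measure X} {ν : Measure Y} [IsFiniteMeasureOnCompacts μ] [IsFiniteMeasureOnCompacts ν]
  {G : Type*} [NormedAddCommGroup G]

theorem Continuous.integrableOn_of_isBounded {f : X → G} (hf : Continuous f) {s : Set X}
    (hs : Bornology.IsBounded s) : IntegrableOn f s μ :=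
  (hf.locallyIntegrable.integrableOn_isCompact hs.isCompact_closure).mono_set subset_closure

theorem Continuous.integrable_prod_restrict [SFinite ν] {f : X × Y → G} (hf : Continuous f)
    {s : Set X} {t : Set Y} (hs : Bornology.IsBounded s) (ht : Bornology.IsBounded t) :
    Integrable f ((μ.restrict s).prod (ν.restrict t)) := by
  rw [Measure.prod_restrict]
  exact hf.integrableOn_of_isBounded (hs.prod ht)

theorem Continuous.memLp_restrict_of_isBounded {f : X → G} (hf : Continuous f) {s : Set X}
    (hs : Bornology.IsBounded s) (p : ENNReal) : MemLp f p (μ.restrict s) := by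
  have : IsFiniteMeasure (μ.restrict s) := isFiniteMeasure_restrict.2
    ((measure_mono subset_closure).trans_lt hs.isCompact_closure.measure_lt_top).ne
  obtain ⟨C, hC⟩ := hs.isCompact_closure.exists_bound_of_continuousOn hf.continuousOn
  exact (memLp_top_of_bound hf.aestronglyMeasurable C (ae_restrict_of_ae_restrict_of_subset
    subset_closure (ae_restrict_of_forall_mem isClosed_closure.measurableSet hC))).mono_exponent
    le_top

end ProperSpace

theorem cutoff_le_indicator_ball {X : Type*} [PseudoMetricSpace X] {ψ : ℝ → ℝ}
    (hψ_mem : ∀ t : ℝ, 0 ≤ t → ψ t ∈ Set.Icc (0 : ℝ) 1) (hψ_supp : ∀ t : ℝ, 1 ≤ t → ψ t = 0)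
    (x : X) {r : ℝ} (hr : 0 < r) : (fun z => ψ (dist x z / r)) ≤ (ball x r).indicator 1 := by
  intro z
  by_cases hz : z ∈ ball x r
  · simpa [hz] using (hψ_mem _ (by positivity)).2
  · show ψ (dist x z / r) ≤ _
    rw [Set.indicator_of_notMem hz, hψ_supp _ ((one_le_div hr).2 _)]
    simpa [dist_comm] using hz

/-- `(ψ_r ∗ u)(x)`. -/
noncomputable def mollify {E F : Type*} [NormedAddCommGroup E] [MeasurableSpace E]
    [NormedAddCommGroup F] [NormedSpace ℝ F] (μ : Measure E) (ψ : ℝ → ℝ) (r : ℝ) (u : E → F)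
    (x : E) : F :=
  (∫ z, ψ (dist x z / r) ∂μ)⁻¹ • ∫ z, ψ (dist x z / r) • u z ∂μ

noncomputable def schoenUhlenbeckConstant {E : Type*} [NormedAddCommGroup E] [NormedSpace ℝ E]
    [MeasurableSpace E] (μ : Measure E) (ψ : ℝ → ℝ) : ℝ :=
  2 ^ (finrank ℝ E + 1) * μ.real (ball 0 1) ^ (2 - 1 / (finrank ℝ E : ℝ)) / (∫ w, ψ ‖w‖ ∂μ) ^ 2

theorem schoenUhlenbeckConstant_pos {E : Type*} [NormedAddCommGroup E] [NormedSpace ℝ E]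
    [FiniteDimensional ℝ E] [Nontrivial E] [MeasurableSpace E] (μ : Measure E)
    [μ.IsAddHaarMeasure] {ψ : ℝ → ℝ} (hψ_pos : 0 < ∫ w, ψ ‖w‖ ∂μ) :
    0 < schoenUhlenbeckConstant μ ψ := by
  have hV : 0 < μ.real (ball 0 1) :=
    ENNReal.toReal_pos (measure_ball_pos _ _ one_pos).ne' measure_ball_lt_top.ne
  unfold schoenUhlenbeckConstant
  positivity

section Segment

variable {E F : Type*} [NormedAddCommGroup E] [NormedSpace ℝ E]
  [NormedAddCommGroup F] [NormedSpace ℝ F] [CompleteSpace F]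

theorem continuous_midpoint : Continuous fun p : E × E => midpoint ℝ p.1 p.2 := by
  simp_rw [midpoint_eq_smul_add]
  fun_prop

theorem norm_sub_le_integral_norm_fderiv_mul {u : E → F} (hu : ContDiff ℝ 1 u) (p q : E) :
    ‖u q - u p‖ ≤ (∫ s in Set.Ioc (0 : ℝ) 1, ‖fderiv ℝ u (p + s • (q - p))‖) * ‖q - p‖ := by
  have hline : Continuous fun s : ℝ => p + s • (q - p) := by fun_prop
  have hDu : Continuous fun s : ℝ => fderiv ℝ u (p + s • (q - p)) :=
    (hu.continuous_fderiv one_ne_zero).comp hline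
  have hderiv : ∀ s ∈ Set.uIcc (0 : ℝ) 1,
      HasDerivAt (fun t => u (p + t • (q - p))) (fderiv ℝ u (p + s • (q - p)) (q - p)) s :=
    fun s _ => (hu.differentiable one_ne_zero _).hasFDerivAt.comp_hasDerivAt s
      (by simpa using ((hasDerivAt_id s).smul_const (q - p)).const_add p)
  have hFTC := intervalIntegral.integral_eq_sub_of_hasDerivAt hderiv
    ((hDu.clm_apply continuous_const).intervalIntegrable 0 1)
  simp only [one_smul, zero_smul, add_zero, add_sub_cancel] at hFTC
  rw [← hFTC, ← integral_mul_const, ← intervalIntegral.integral_of_le zero_le_one]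
  refine (intervalIntegral.norm_integral_le_integral_norm zero_le_one).trans ?_
  exact intervalIntegral.integral_mono_on zero_le_one
    ((hDu.clm_apply continuous_const).norm.intervalIntegrable 0 1)
    ((hDu.norm.mul continuous_const).intervalIntegrable 0 1)
    fun s _ => ContinuousLinearMap.le_opNorm _ _

theorem norm_sub_midpoint_le {u : E → F} (hu : ContDiff ℝ 1 u) {x y z : E} {r : ℝ}
    (hy : y ∈ ball x r) (hz : z ∈ ball x r) :
    ‖u z - u (midpoint ℝ y z)‖
      ≤ r * ∫ s in Set.Ioc (0 : ℝ) 1, ‖fderiv ℝ u (((1 - s) / 2) • y + ((1 + s) / 2) • z)‖ := by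
  have hseg : ∀ s : ℝ, midpoint ℝ y z + s • (z - midpoint ℝ y z)
      = ((1 - s) / 2) • y + ((1 + s) / 2) • z := fun s => by
    rw [midpoint_eq_smul_add, invOf_eq_inv]
    module
  have hdist : ‖z - midpoint ℝ y z‖ ≤ r := by
    rw [← dist_eq_norm, dist_right_midpoint, Real.norm_two, inv_mul_le_iff₀ two_pos]
    linarith [dist_triangle_right y z x, mem_ball.1 hy, mem_ball.1 hz]
  have h := norm_sub_le_integral_norm_fderiv_mul hu (midpoint ℝ y z) z
  simp_rw [hseg] at h
  rw [mul_comm r]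
  exact h.trans (mul_le_mul_of_nonneg_left hdist
    (setIntegral_nonneg measurableSet_Ioc fun _ _ => norm_nonneg _))

end Segment

section Haar

variable {E F : Type*} [NormedAddCommGroup E] [NormedSpace ℝ E] [FiniteDimensional ℝ E]
  [MeasurableSpace E] [BorelSpace E] (μ : Measure E) [μ.IsAddHaarMeasure]
  [NormedAddCommGroup F] [NormedSpace ℝ F] [CompleteSpace F]

theorem integral_comp_add_smul (f : E → ℝ) (c : E) {b : ℝ} (hb : 0 ≤ b) :
    ∫ z, f (c + b • z) ∂μ = (b ^ finrank ℝ E)⁻¹ * ∫ z, f z ∂μ := by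
  rw [Measure.integral_comp_smul_of_nonneg μ (fun w => f (c + w)) b (hR := hb), smul_eq_mul,
    integral_add_left_eq_self f c]

theorem setIntegral_comp_add_smul_le {g : E → ℝ} {s : Set E} (hs : MeasurableSet s)
    (hg0 : ∀ z ∈ s, 0 ≤ g z) (hg : IntegrableOn g s μ) {c : E} {b : ℝ} (hb : 1 / 2 ≤ b)
    (hmaps : Set.MapsTo (fun z => c + b • z) s s) :
    ∫ z in s, g (c + b • z) ∂μ ≤ 2 ^ finrank ℝ E * ∫ z in s, g z ∂μ := by
  have hb0 : 0 < b := by linarith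
  set G := s.indicator g
  have hG0 : 0 ≤ G := Set.indicator_nonneg hg0
  have hGcomp : Integrable (fun z => G (c + b • z)) μ :=
    ((hg.integrable_indicator hs).comp_add_left c).comp_smul hb0.ne'
  calc ∫ z in s, g (c + b • z) ∂μ = ∫ z in s, G (c + b • z) ∂μ :=
        setIntegral_congr_fun hs fun z hz => (Set.indicator_of_mem (hmaps hz) g).symm
    _ ≤ ∫ z, G (c + b • z) ∂μ :=
        setIntegral_le_integral hGcomp (.of_forall fun z => hG0 (c + b • z))
    _ = (b ^ finrank ℝ E)⁻¹ * ∫ z in s, g z ∂μ := by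
        rw [integral_comp_add_smul μ G c hb0.le, integral_indicator hs]
    _ ≤ 2 ^ finrank ℝ E * ∫ z in s, g z ∂μ := by
        gcongr
        · exact setIntegral_nonneg hs hg0
        · rw [← inv_pow, ← one_div]
          gcongr
          rw [div_le_iff₀ hb0]
          linarith

theorem integral_comp_dist_div (ψ : ℝ → ℝ) (x : E) {r : ℝ} (hr : 0 < r) :
    ∫ z, ψ (dist x z / r) ∂μ = r ^ finrank ℝ E * ∫ w, ψ ‖w‖ ∂μ := by
  have h : ∀ z, ψ (dist x z / r) = ψ ‖r⁻¹ • (z - x)‖ := fun z => by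
    rw [norm_smul, norm_inv, Real.norm_of_nonneg hr.le, dist_eq_norm', inv_mul_eq_div]
  simp_rw [h]
  rw [integral_sub_right_eq_self (fun v => ψ ‖r⁻¹ • v‖) x,
    Measure.integral_comp_inv_smul_of_nonneg μ (fun v => ψ ‖v‖) hr.le, smul_eq_mul]

theorem setIntegral_norm_sub_midpoint_le {u : E → F} (hu : ContDiff ℝ 1 u) {x y : E} {r : ℝ}
    (hy : y ∈ ball x r) :
    ∫ z in ball x r, ‖u z - u (midpoint ℝ y z)‖ ∂μ
      ≤ r * (2 ^ finrank ℝ E * ∫ z in ball x r, ‖fderiv ℝ u z‖ ∂μ) := by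
  have hDu : Continuous fun z => ‖fderiv ℝ u z‖ := (hu.continuous_fderiv one_ne_zero).norm
  set G : E → ℝ → ℝ := fun z s => ‖fderiv ℝ u (((1 - s) / 2) • y + ((1 + s) / 2) • z)‖
  have hG : Integrable (Function.uncurry G)
      ((μ.restrict (ball x r)).prod (volume.restrict (Set.Ioc (0 : ℝ) 1))) :=
    (hDu.comp (by fun_prop)).integrable_prod_restrict isBounded_ball (isBounded_Ioc 0 1)
  -- for fixed `s`, `z ↦ (1 - s) / 2 • y + (1 + s) / 2 • z` is a homothety of ratio `≥ 1/2`
  -- mapping the ball into itself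
  have hinner : ∀ s ∈ Set.Ioc (0 : ℝ) 1,
      ∫ z in ball x r, G z s ∂μ ≤ 2 ^ finrank ℝ E * ∫ z in ball x r, ‖fderiv ℝ u z‖ ∂μ :=
    fun s hs => setIntegral_comp_add_smul_le μ measurableSet_ball
      (fun _ _ => norm_nonneg _) (hDu.integrableOn_of_isBounded isBounded_ball)
      (by linarith [hs.1]) fun z hz =>
        convex_ball x r hy hz (by linarith [hs.2]) (by linarith [hs.1]) (by ring)
  calc ∫ z in ball x r, ‖u z - u (midpoint ℝ y z)‖ ∂μ
      ≤ ∫ z in ball x r, r * (∫ s in Set.Ioc (0 : ℝ) 1, G z s) ∂μ := by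
        refine setIntegral_mono_on ?_ (hG.integral_prod_left.const_mul r) measurableSet_ball
          fun z hz => norm_sub_midpoint_le hu hy hz
        exact (hu.continuous.sub (hu.continuous.comp (continuous_midpoint.comp
          (continuous_const.prodMk continuous_id)))).norm.integrableOn_of_isBounded isBounded_ball
    _ = r * ∫ s in Set.Ioc (0 : ℝ) 1, ∫ z in ball x r, G z s ∂μ := by
        rw [integral_const_mul, integral_integral_swap hG]
    _ ≤ r * ∫ s in Set.Ioc (0 : ℝ) 1,
          2 ^ finrank ℝ E * ∫ z in ball x r, ‖fderiv ℝ u z‖ ∂μ := by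
        refine mul_le_mul_of_nonneg_left ?_ (pos_of_mem_ball hy).le
        exact setIntegral_mono_on hG.integral_prod_right (integrableOn_const (by simp))
          measurableSet_Ioc hinner
    _ = r * (2 ^ finrank ℝ E * ∫ z in ball x r, ‖fderiv ℝ u z‖ ∂μ) := by
        simp

theorem setIntegral_setIntegral_norm_sub_le {u : E → F} (hu : ContDiff ℝ 1 u) (x : E) (r : ℝ) :
    ∫ y in ball x r, ∫ z in ball x r, ‖u z - u y‖ ∂μ ∂μ
      ≤ 2 * μ.real (ball x r) * (r * (2 ^ finrank ℝ E
          * ∫ z in ball x r, ‖fderiv ℝ u z‖ ∂μ)) := by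
  set B := ball x r
  have hprod : ∀ f : E × E → ℝ, Continuous f → Integrable f ((μ.restrict B).prod (μ.restrict B)) :=
    fun f hf => hf.integrable_prod_restrict isBounded_ball isBounded_ball
  have hslice : ∀ f : E × E → ℝ, Continuous f → ∀ y, IntegrableOn (fun z => f (y, z)) B μ :=
    fun f hf y => (hf.comp (.prodMk_right y)).integrableOn_of_isBounded isBounded_ball
  have hm : Continuous fun p : E × E => u (midpoint ℝ p.1 p.2) :=
    hu.continuous.comp continuous_midpoint
  have hc₁ : Continuous fun p : E × E => ‖u p.2 - u (midpoint ℝ p.1 p.2)‖ :=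
    ((hu.continuous.comp continuous_snd).sub hm).norm
  have hc₂ : Continuous fun p : E × E => ‖u p.1 - u (midpoint ℝ p.1 p.2)‖ :=
    ((hu.continuous.comp continuous_fst).sub hm).norm
  have hc : Continuous fun p : E × E => ‖u p.2 - u p.1‖ := by fun_prop
  have hswap : ∫ y in B, ∫ z in B, ‖u y - u (midpoint ℝ y z)‖ ∂μ ∂μ
      = ∫ y in B, ∫ z in B, ‖u z - u (midpoint ℝ y z)‖ ∂μ ∂μ := by
    rw [integral_integral_swap (f := fun y z => ‖u y - u (midpoint ℝ y z)‖) (hprod _ hc₂)]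
    simp_rw [midpoint_comm]
  have hhalf : ∫ y in B, ∫ z in B, ‖u z - u (midpoint ℝ y z)‖ ∂μ ∂μ
      ≤ μ.real B * (r * (2 ^ finrank ℝ E * ∫ z in B, ‖fderiv ℝ u z‖ ∂μ)) := by
    rw [← smul_eq_mul, ← setIntegral_const]
    exact setIntegral_mono_on (hprod _ hc₁).integral_prod_left
      (integrableOn_const measure_ball_lt_top.ne) measurableSet_ball
      fun y hy => setIntegral_norm_sub_midpoint_le μ hu hy
  calc ∫ y in B, ∫ z in B, ‖u z - u y‖ ∂μ ∂μ
      ≤ ∫ y in B, ((∫ z in B, ‖u z - u (midpoint ℝ y z)‖ ∂μ)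
          + ∫ z in B, ‖u y - u (midpoint ℝ y z)‖ ∂μ) ∂μ := by
        refine setIntegral_mono_on (hprod _ hc).integral_prod_left
          ((hprod _ hc₁).integral_prod_left.add (hprod _ hc₂).integral_prod_left)
          measurableSet_ball fun y _ => ?_
        rw [← integral_add (hslice _ hc₁ y) (hslice _ hc₂ y)]
        refine setIntegral_mono_on (hslice _ hc y) ((hslice _ hc₁ y).add (hslice _ hc₂ y))
          measurableSet_ball fun z _ => ?_
        simp only [← dist_eq_norm]
        exact dist_triangle_right _ _ _
    _ ≤ 2 * μ.real B * (r * (2 ^ finrank ℝ E * ∫ z in B, ‖fderiv ℝ u z‖ ∂μ)) := by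
        rw [integral_add (hprod _ hc₁).integral_prod_left (hprod _ hc₂).integral_prod_left,
          hswap]
        linarith

theorem infDist_average_le {w : E → ℝ} {u : E → F} {N : Set F} {x : E} {r : ℝ}
    (hw : Continuous w) (hw0 : 0 ≤ w) (hwB : w ≤ (ball x r).indicator 1)
    (hK : 0 < ∫ z, w z ∂μ) (hu : Continuous u) (huN : ∀ z, u z ∈ N) :
    infDist ((∫ z, w z ∂μ)⁻¹ • ∫ z, w z • u z ∂μ) N
      ≤ (∫ z, w z ∂μ)⁻¹ * ((∫ z, w z ∂μ)⁻¹
          * ∫ y in ball x r, ∫ z in ball x r, ‖u z - u y‖ ∂μ ∂μ) := by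
  set K := ∫ z, w z ∂μ
  set v := K⁻¹ • ∫ z, w z • u z ∂μ
  have hwc : HasCompactSupport w := HasCompactSupport.intro (isCompact_closedBall x r)
    fun z hz => le_antisymm ((hwB z).trans_eq
      (Set.indicator_of_notMem (fun h => hz (ball_subset_closedBall h)) _)) (hw0 z)
  have hwint : Integrable w μ := hw.integrable_of_hasCompactSupport hwc
  have hpoint : ∀ y, ‖v - u y‖ ≤ K⁻¹ * ∫ z in ball x r, ‖u z - u y‖ ∂μ := fun y =>
    (norm_average_sub_le (u y) hw0 hwint
      ((hw.smul hu).integrable_of_hasCompactSupport hwc.smul_right) hK).trans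
      (mul_le_mul_of_nonneg_left (integral_mul_le_setIntegral_of_le measurableSet_ball hw0 hwB
        (fun _ _ => norm_nonneg _) (fun _ _ => le_rfl)
        ((hu.sub continuous_const).norm.integrableOn_of_isBounded isBounded_ball))
        (inv_nonneg.2 hK.le))
  have hΦ : IntegrableOn (fun y => ∫ z in ball x r, ‖u z - u y‖ ∂μ) (ball x r) μ :=
    (Continuous.integrable_prod_restrict (f := fun p : E × E => ‖u p.2 - u p.1‖) (by fun_prop)
      isBounded_ball isBounded_ball).integral_prod_left
  rw [le_inv_mul_iff₀ hK, ← integral_const_mul]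
  exact (integral_mul_infDist_le v hw0 hwint huN ((hw.mul (continuous_const.sub hu).norm)
    |>.integrable_of_hasCompactSupport hwc.mul_right)).trans
    (integral_mul_le_setIntegral_of_le measurableSet_ball hw0 hwB (fun _ _ => norm_nonneg _)
      (fun y _ => hpoint y) (hΦ.const_mul _))

theorem infDist_mollify_le [Nontrivial E] {ψ : ℝ → ℝ} (hψ : ContinuousOn ψ (Set.Ici 0))
    (hψ_mem : ∀ t : ℝ, 0 ≤ t → ψ t ∈ Set.Icc (0 : ℝ) 1) (hψ_supp : ∀ t : ℝ, 1 ≤ t → ψ t = 0)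
    (hψ_pos : 0 < ∫ w, ψ ‖w‖ ∂μ) {N : Set F} {u : E → F} (hu : ContDiff ℝ 1 u)
    (huN : ∀ z, u z ∈ N) (x : E) {r : ℝ} (hr : 0 < r) :
    infDist (mollify μ ψ r u x) N ≤ schoenUhlenbeckConstant μ ψ
      * (∫ z in ball x r, ‖fderiv ℝ u z‖ ^ (finrank ℝ E : ℝ) ∂μ) ^ ((1 : ℝ) / finrank ℝ E) := by
  set d := finrank ℝ E
  set I := ∫ w, ψ ‖w‖ ∂μ
  set V := μ.real (ball 0 1)
  set K := ∫ z, ψ (dist x z / r) ∂μ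
  set A := ∫ z in ball x r, ‖fderiv ℝ u z‖ ∂μ
  set P := ∫ z in ball x r, ‖fderiv ℝ u z‖ ^ (d : ℝ) ∂μ
  have hd : 1 ≤ d := finrank_pos
  have hV : 0 < V := ENNReal.toReal_pos (measure_ball_pos _ _ one_pos).ne' measure_ball_lt_top.ne
  have hK : K = r ^ d * I := integral_comp_dist_div μ ψ x hr
  have hK0 : 0 < K := by rw [hK]; positivity
  have hB : μ.real (ball x r) = r ^ d * V := by
    rw [← Measure.addHaar_real_closedBall_eq_addHaar_real_ball,
      Measure.addHaar_real_closedBall μ x hr.le]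
  calc infDist (mollify μ ψ r u x) N
      ≤ K⁻¹ * (K⁻¹ * ∫ y in ball x r, ∫ z in ball x r, ‖u z - u y‖ ∂μ ∂μ) :=
        infDist_average_le μ (w := fun z => ψ (dist x z / r))
          (hψ.comp_continuous (by fun_prop) fun z => div_nonneg dist_nonneg hr.le)
          (fun z => (hψ_mem _ (by positivity)).1) (cutoff_le_indicator_ball hψ_mem hψ_supp x hr)
          hK0 hu.continuous huN
    _ ≤ K⁻¹ * (K⁻¹ * (2 * μ.real (ball x r) * (r * (2 ^ d * A)))) := by
        gcongr
        exact setIntegral_setIntegral_norm_sub_le μ hu x r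
    _ ≤ K⁻¹ * (K⁻¹ * (2 * μ.real (ball x r) * (r * (2 ^ d *
          (P ^ (1 / (d : ℝ)) * μ.real (ball x r) ^ (((d : ℝ) - 1) / d)))))) := by
        gcongr
        exact setIntegral_le_rpow_mul_measureReal (p := d) (by exact_mod_cast hd)
          (fun _ _ => norm_nonneg _) measurableSet_ball measure_ball_lt_top.ne
          ((hu.continuous_fderiv one_ne_zero).norm.memLp_restrict_of_isBounded isBounded_ball _)
    _ = schoenUhlenbeckConstant μ ψ * P ^ ((1 : ℝ) / d) := by
        have hV' : V ^ (2 - 1 / (d : ℝ)) = V * V ^ ((d - 1 : ℝ) / d) := by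
          have hd' : (0 : ℝ) < d := by exact_mod_cast hd
          rw [show 2 - 1 / (d : ℝ) = 1 + (d - 1) / d by field_simp; ring, Real.rpow_add hV,
            Real.rpow_one]
        have hpow : (r ^ d * V) ^ ((d - 1 : ℝ) / d) = r ^ (d - 1) * V ^ ((d - 1 : ℝ) / d) := by
          rw [Real.mul_rpow (by positivity) hV.le, ← Real.rpow_natCast r, ← Real.rpow_mul hr.le,
            ← Real.rpow_natCast r, Nat.cast_sub hd, Nat.cast_one]
          congr 2
          field_simp
        change _ = 2 ^ (d + 1) * V ^ (2 - 1 / (d : ℝ)) / I ^ 2 * _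
        rw [hV', hK, hB, hpow]
        -- `d - 1` is truncated subtraction: write `d = m + 1` so that `ring` can finish
        obtain ⟨m, hm⟩ := Nat.exists_eq_add_of_le' hd
        rw [hm, Nat.add_sub_cancel]
        field_simp
        ring

end Haar

/-- (Smooth Euclidean Schoen–Uhlenbeck lemma.) Let `ψ` be a cutoff function with
`∫_{ℝⁿ} ψ(|w|) dw > 0` and let `N ⊆ ℝ^ν` be nonempty and closed. There is `C = C(n, ψ)` such
that for every `C¹` map `u : ℝⁿ → ℝ^ν` with values in `N`, every `x` and every `r > 0`,
`dist((ψ_r ∗ u)(x), N) ≤ C (∫_{B(x,r)} ‖Du‖ⁿ)^{1/n}`. -/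
theorem stmt_8 (n : ℕ) (hn : 1 ≤ n) (ψ : ℝ → ℝ) (L : NNReal)
    (hψ_lip : LipschitzOnWith L ψ (Set.Ici 0))
    (hψ_mem : ∀ t : ℝ, 0 ≤ t → ψ t ∈ Set.Icc (0 : ℝ) 1)
    (hψ_supp : ∀ t : ℝ, 1 ≤ t → ψ t = 0)
    (hψ_pos : 0 < ∫ w : EuclideanSpace ℝ (Fin n), ψ ‖w‖) :
    ∃ C : ℝ, 0 < C ∧
      ∀ (ν : ℕ) (N : Set (EuclideanSpace ℝ (Fin ν))), N.Nonempty → IsClosed N →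
      ∀ (u : EuclideanSpace ℝ (Fin n) → EuclideanSpace ℝ (Fin ν)), ContDiff ℝ 1 u →
        (∀ z, u z ∈ N) →
      ∀ (x : EuclideanSpace ℝ (Fin n)) (r : ℝ), 0 < r →
        Metric.infDist
            ((∫ z, ψ (dist x z / r))⁻¹ • ∫ z, ψ (dist x z / r) • u z) N
          ≤ C * (∫ z in ball x r, ‖fderiv ℝ u z‖ ^ (n : ℝ)) ^ ((1 : ℝ) / n) := by
  have : Nontrivial (EuclideanSpace ℝ (Fin n)) :=
    Module.nontrivial_of_finrank_pos (R := ℝ) (by rw [finrank_euclideanSpace_fin]; omega)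
  refine ⟨schoenUhlenbeckConstant volume ψ, schoenUhlenbeckConstant_pos volume hψ_pos,
    fun ν N _ _ u hu huN x r hr => ?_⟩
  simpa only [mollify, finrank_euclideanSpace_fin] using
    infDist_mollify_le volume hψ_lip.continuousOn hψ_mem hψ_supp hψ_pos hu huN x hr
end

section
/- Let n ≥ 1 be an integer, let ψ be a cutoff function with ∫_{ℝⁿ} ψ(|w|) dw > 0, and let u : ℝⁿ → ℝ^ν be continuously differentiable with ∫_{ℝⁿ} ‖Du‖ⁿ dz < ∞. Then there is a constant C, depending only on n and ψ, such that for all radii 0 < s ≤ r < 2s, sup_{x ∈ ℝⁿ} ‖(ψ_r ∗ u)(x) − (ψ_s ∗ u)(x)‖ ≤ C · (r/s − 1) · ( ∫_{ℝⁿ} ‖Du(z)‖ⁿ dz )^{1/n}. In particular, ψ_s ∗ u converges uniformly to ψ_r ∗ u as s → r, for every r > 0. -/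
/-!
After the substitution `z = x - ρ • w`, both mollifications are averages of `u (x - ρ • w)`
against the fixed weight `ψ ‖w‖`, so their difference is the integral over `ρ ∈ [s, r]` of
`∫ ψ ‖w‖ • Du (x - ρ • w) (-w) dw`. Hölder's inequality in `w` with exponents `n` and `n / (n - 1)`
bounds the norm of this by `ρ⁻¹ ‖Du‖_{Lⁿ} |B₁|^{1 - 1/n}`: the factor `ρ⁻¹` is exactly what the
dilation does to the critical `Lⁿ` norm. Integrating over `[s, r]` gives the factor `r / s - 1`.
-/

open MeasureTheory Metric Module Set Filter Topology

theorem integral_mul_le_integral_rpow_mul_measureReal {α : Type*} [MeasurableSpace α]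
    {μ : Measure α} {p : ℝ} (hp : 1 ≤ p) {φ h : α → ℝ} {S : Set α} (hμS : μ S ≠ ⊤)
    (hφ : AEStronglyMeasurable φ μ) (hφ0 : ∀ a, 0 ≤ φ a) (hφ1 : ∀ a, φ a ≤ 1)
    (hφS : ∀ a ∉ S, φ a = 0) (hh : AEStronglyMeasurable h μ) (hh0 : ∀ a, 0 ≤ h a)
    (hhp : Integrable (fun a => h a ^ p) μ) :
    ∫ a, φ a * h a ∂μ ≤ (∫ a, h a ^ p ∂μ) ^ (1 / p) * μ.real S ^ (1 - 1 / p) := by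
  rcases hp.eq_or_lt with rfl | hp
  · simp only [Real.rpow_one, div_one, sub_self, Real.rpow_zero, mul_one] at hhp ⊢
    exact integral_mono_of_nonneg (.of_forall fun a => mul_nonneg (hφ0 a) (hh0 a)) hhp
      (.of_forall fun a => mul_le_of_le_one_left (hh0 a) (hφ1 a))
  set q := p.conjExponent
  have hpq : p.HolderConjugate q := .conjExponent hp
  have hhLp : MemLp h (ENNReal.ofReal p) μ := by
    refine (integrable_norm_rpow_iff hh (by simpa using hpq.pos) ENNReal.ofReal_ne_top).1 ?_
    simpa [ENNReal.toReal_ofReal hpq.nonneg, Real.norm_of_nonneg (hh0 _)] using hhp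
  have hφ_norm : ∀ a, ‖φ a‖ ≤ 1 := fun a => by rw [Real.norm_of_nonneg (hφ0 a)]; exact hφ1 a
  have hφLq : MemLp φ (ENNReal.ofReal q) μ :=
    (memLp_top_of_bound hφ 1 (.of_forall hφ_norm)).mono_exponent_of_measure_support_ne_top
      hφS hμS le_top
  have hφq : ∫ a, φ a ^ q ∂μ ≤ μ.real S := by
    rw [← setIntegral_eq_integral_of_forall_compl_eq_zero fun a ha => by
      rw [hφS a ha, Real.zero_rpow hpq.symm.ne_zero]]
    refine (Real.le_norm_self _).trans ((norm_setIntegral_le_of_norm_le_const hμS.lt_top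
      fun a _ => ?_).trans (one_mul _).le)
    rw [Real.norm_of_nonneg (Real.rpow_nonneg (hφ0 a) q)]
    exact Real.rpow_le_one (hφ0 a) (hφ1 a) hpq.symm.nonneg
  calc ∫ a, φ a * h a ∂μ = ∫ a, h a * φ a ∂μ := by simp_rw [mul_comm]
    _ ≤ (∫ a, h a ^ p ∂μ) ^ (1 / p) * (∫ a, φ a ^ q ∂μ) ^ (1 / q) :=
      integral_mul_le_Lp_mul_Lq_of_nonneg hpq (.of_forall hh0) (.of_forall hφ0) hhLp hφLq
    _ ≤ (∫ a, h a ^ p ∂μ) ^ (1 / p) * μ.real S ^ (1 - 1 / p) := by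
      rw [show 1 - 1 / p = 1 / q by rw [one_div, one_div, hpq.one_sub_inv]]
      have : 0 ≤ ∫ a, h a ^ p ∂μ := integral_nonneg fun a => Real.rpow_nonneg (hh0 a) p
      have : 0 ≤ ∫ a, φ a ^ q ∂μ := integral_nonneg fun a => Real.rpow_nonneg (hφ0 a) q
      gcongr
      exact hpq.symm.one_div_nonneg

theorem tendstoUniformly_nhdsWithin_of_dist_le_mul_div_sub_one {X Y : Type*}
    [PseudoMetricSpace Y] {G : ℝ → X → Y} {K : ℝ} (hK : 0 ≤ K)
    (hG : ∀ r s, 0 < s → s ≤ r → ∀ x, dist (G r x) (G s x) ≤ K * (r / s - 1)) {r : ℝ}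
    (hr : 0 < r) : TendstoUniformly G (G r) (𝓝[Ioi 0] r) := by
  have hbound : Tendsto (fun s => K * (max (r / s) (s / r) - 1)) (𝓝[Ioi 0] r) (𝓝 0) := by
    have : ContinuousAt (fun s => K * (max (r / s) (s / r) - 1)) r := by
      fun_prop (disch := exact hr.ne')
    simpa [hr.ne'] using this.tendsto.mono_left nhdsWithin_le_nhds
  rw [Metric.tendstoUniformly_iff]
  intro ε hε
  filter_upwards [hbound.eventually (gt_mem_nhds hε), self_mem_nhdsWithin] with s hsε hs x
  refine lt_of_le_of_lt ?_ hsε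
  rcases le_total s r with h | h
  · exact (hG r s hs h x).trans (by gcongr; exact le_max_left _ _)
  · rw [dist_comm]
    exact (hG s r hr h x).trans (by gcongr; exact le_max_right _ _)

noncomputable def cutoffMollify {E F : Type*} [PseudoMetricSpace E] [MeasurableSpace E]
    [NormedAddCommGroup F] [NormedSpace ℝ F] (μ : Measure E) (ψ : ℝ → ℝ) (ρ : ℝ) (u : E → F)
    (x : E) : F :=
  (∫ z, ψ (dist x z / ρ) ∂μ)⁻¹ • ∫ z, ψ (dist x z / ρ) • u z ∂μ

section

variable {E F : Type*} [NormedAddCommGroup E] [NormedSpace ℝ E] [NormedAddCommGroup F]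
  [NormedSpace ℝ F]

theorem norm_sub_le_integral_norm_fderiv_comp_sub_smul [CompleteSpace F] {u : E → F}
    (hu : ContDiff ℝ 1 u) (x w : E) {s r : ℝ} (hsr : s ≤ r) :
    ‖u (x - r • w) - u (x - s • w)‖ ≤ ‖w‖ * ∫ t in s..r, ‖fderiv ℝ u (x - t • w)‖ := by
  have hderiv : ∀ t ∈ uIcc s r,
      HasDerivAt (fun t : ℝ => u (x - t • w)) (fderiv ℝ u (x - t • w) (-w)) t := fun t _ => by
    have hline : HasDerivAt (fun t : ℝ => x - t • w) (-w) t := by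
      simpa using ((hasDerivAt_id t).smul_const w).const_sub x
    exact ((hu.differentiable one_ne_zero _).hasFDerivAt).comp_hasDerivAt t hline
  have hDu : Continuous fun t : ℝ => fderiv ℝ u (x - t • w) :=
    (hu.continuous_fderiv one_ne_zero).comp (by fun_prop)
  rw [← intervalIntegral.integral_eq_sub_of_hasDerivAt hderiv
    ((hDu.clm_apply continuous_const).intervalIntegrable s r),
    ← intervalIntegral.integral_const_mul]
  refine (intervalIntegral.norm_integral_le_integral_norm hsr).trans
    (intervalIntegral.integral_mono_on hsr
      ((hDu.clm_apply continuous_const).norm.intervalIntegrable s r)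
      ((continuous_const.mul hDu.norm).intervalIntegrable s r) fun t _ => ?_)
  rw [mul_comm, ← norm_neg w]
  exact (fderiv ℝ u (x - t • w)).le_opNorm (-w)

end

section

variable {E F : Type*} [NormedAddCommGroup E] [NormedSpace ℝ E] [FiniteDimensional ℝ E]
  [MeasurableSpace E] [BorelSpace E] (μ : Measure E) [μ.IsAddHaarMeasure] [NormedAddCommGroup F]

theorem MeasureTheory.Integrable.comp_sub_smul {f : E → F} (hf : Integrable f μ) (x : E) {ρ : ℝ}
    (hρ : ρ ≠ 0) : Integrable (fun w => f (x - ρ • w)) μ :=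
  (integrable_comp_smul_iff μ (fun y => f (x - y)) hρ).2 (hf.comp_sub_left x)

variable [NormedSpace ℝ F]

theorem integral_comp_sub_smul (f : E → F) (x : E) {ρ : ℝ} (hρ : 0 < ρ) :
    ∫ w, f (x - ρ • w) ∂μ = (ρ ^ finrank ℝ E)⁻¹ • ∫ z, f z ∂μ := by
  simp_rw [sub_eq_add_neg, ← neg_smul]
  rw [Measure.integral_comp_smul μ (fun y => f (x + y)), integral_add_left_eq_self, neg_pow,
    abs_inv, abs_mul, abs_pow, abs_neg, abs_one, one_pow, one_mul, abs_of_pos (pow_pos hρ _)]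

theorem cutoffMollify_eq_integral_comp_sub_smul (ψ : ℝ → ℝ) (u : E → F) {ρ : ℝ} (hρ : 0 < ρ)
    (x : E) :
    cutoffMollify μ ψ ρ u x = (∫ w, ψ ‖w‖ ∂μ)⁻¹ • ∫ w, ψ ‖w‖ • u (x - ρ • w) ∂μ := by
  have hdist : ∀ w : E, dist x (x - ρ • w) / ρ = ‖w‖ := fun w => by
    rw [dist_eq_norm, sub_sub_cancel, norm_smul, Real.norm_of_nonneg hρ.le,
      mul_div_cancel_left₀ _ hρ.ne']
  have hnum := integral_comp_sub_smul μ (fun z => ψ (dist x z / ρ) • u z) x hρ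
  have hden := integral_comp_sub_smul μ (fun z => ψ (dist x z / ρ)) x hρ
  simp only [hdist, smul_eq_mul] at hnum hden
  have hρd : ρ ^ finrank ℝ E ≠ 0 := pow_ne_zero _ hρ.ne'
  rw [eq_inv_smul_iff₀ hρd] at hnum
  rw [eq_inv_mul_iff_mul_eq₀ hρd] at hden
  rw [cutoffMollify, ← hnum, ← hden, smul_smul]
  congr 1
  field_simp

theorem integral_mul_comp_sub_smul_le [Nontrivial E] {φ g : E → ℝ} {S : Set E}
    (hμS : μ S ≠ ⊤) (hφ : AEStronglyMeasurable φ μ) (hφ0 : ∀ w, 0 ≤ φ w) (hφ1 : ∀ w, φ w ≤ 1)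
    (hφS : ∀ w ∉ S, φ w = 0) (hg : Measurable g) (hg0 : ∀ z, 0 ≤ g z)
    (hgd : Integrable (fun z => g z ^ (finrank ℝ E : ℝ)) μ) (x : E) {t : ℝ} (ht : 0 < t) :
    ∫ w, φ w * g (x - t • w) ∂μ ≤
      t⁻¹ * ((∫ z, g z ^ (finrank ℝ E : ℝ) ∂μ) ^ (1 / (finrank ℝ E : ℝ)) *
        μ.real S ^ (1 - 1 / (finrank ℝ E : ℝ))) := by
  set d := finrank ℝ E
  have hd : d ≠ 0 := finrank_pos.ne'
  have hscale : ∫ w, g (x - t • w) ^ (d : ℝ) ∂μ = (t ^ d)⁻¹ * ∫ z, g z ^ (d : ℝ) ∂μ :=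
    integral_comp_sub_smul μ (fun z => g z ^ (d : ℝ)) x ht
  have hroot : ((t ^ d)⁻¹ * ∫ z, g z ^ (d : ℝ) ∂μ) ^ (1 / (d : ℝ)) =
      t⁻¹ * (∫ z, g z ^ (d : ℝ) ∂μ) ^ (1 / (d : ℝ)) := by
    rw [Real.mul_rpow (by positivity) (integral_nonneg fun z => Real.rpow_nonneg (hg0 z) _),
      Real.inv_rpow (by positivity), one_div, Real.pow_rpow_inv_natCast ht.le hd]
  calc ∫ w, φ w * g (x - t • w) ∂μ
      ≤ (∫ w, g (x - t • w) ^ (d : ℝ) ∂μ) ^ (1 / (d : ℝ)) * μ.real S ^ (1 - 1 / (d : ℝ)) :=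
        integral_mul_le_integral_rpow_mul_measureReal
          (by exact_mod_cast Nat.one_le_iff_ne_zero.2 hd) hμS hφ hφ0 hφ1 hφS
          (hg.comp (by fun_prop)).aestronglyMeasurable (fun w => hg0 _)
          (hgd.comp_sub_smul μ x ht.ne')
    _ = _ := by rw [hscale, hroot, mul_assoc]

theorem norm_integral_smul_comp_sub_smul_sub_le [CompleteSpace F] {φ : E → ℝ}
    (hφ : Continuous φ) (hφ0 : ∀ w, 0 ≤ φ w) (hφS : ∀ w ∉ closedBall 0 1, φ w = 0)
    {u : E → F} (hu : ContDiff ℝ 1 u) (x : E) {s r B : ℝ} (hsr : s ≤ r)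
    (hB : ∀ t ∈ Icc s r, ∫ w, φ w * ‖fderiv ℝ u (x - t • w)‖ ∂μ ≤ B) :
    ‖∫ w, φ w • u (x - r • w) ∂μ - ∫ w, φ w • u (x - s • w) ∂μ‖ ≤ (r - s) * B := by
  set ν := (volume : Measure ℝ).restrict (Icc s r)
  set G : E × ℝ → ℝ := fun p => φ p.1 * ‖fderiv ℝ u (x - p.2 • p.1)‖
  have hG : Continuous G :=
    (hφ.comp continuous_fst).mul ((hu.continuous_fderiv one_ne_zero).comp (by fun_prop)).norm
  have hGint : Integrable G (μ.prod ν) := by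
    rw [← Measure.restrict_univ (μ := μ), Measure.prod_restrict]
    have hK : IsCompact (closedBall (0 : E) 1 ×ˢ Icc s r) :=
      (isCompact_closedBall 0 1).prod isCompact_Icc
    refine (hG.continuousOn.integrableOn_compact hK).of_forall_sdiff_eq_zero
      (MeasurableSet.univ.prod measurableSet_Icc) fun p hp => ?_
    have : p.1 ∉ closedBall 0 1 := fun h => hp.2 ⟨h, hp.1.2⟩
    simp [G, hφS _ this]
  have hint : ∀ ρ : ℝ, Integrable (fun w => φ w • u (x - ρ • w)) μ := fun ρ =>
    (hφ.smul (hu.continuous.comp (by fun_prop))).integrable_of_hasCompactSupport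
      (HasCompactSupport.intro (isCompact_closedBall 0 1) hφS).smul_right
  have hpointwise : ∀ w, ‖φ w • u (x - r • w) - φ w • u (x - s • w)‖ ≤ ∫ t, G (w, t) ∂ν := by
    intro w
    have hφw : φ w * ‖w‖ ≤ φ w := by
      by_cases hw : w ∈ closedBall 0 1
      · exact mul_le_of_le_one_right (hφ0 w) (by simpa using hw)
      · simp [hφS w hw]
    rw [← smul_sub, norm_smul, Real.norm_of_nonneg (hφ0 w)]
    calc φ w * ‖u (x - r • w) - u (x - s • w)‖
        ≤ φ w * (‖w‖ * ∫ t in s..r, ‖fderiv ℝ u (x - t • w)‖) :=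
          mul_le_mul_of_nonneg_left
            (norm_sub_le_integral_norm_fderiv_comp_sub_smul hu x w hsr) (hφ0 w)
      _ ≤ φ w * ∫ t in s..r, ‖fderiv ℝ u (x - t • w)‖ := by
          rw [← mul_assoc]
          exact mul_le_mul_of_nonneg_right hφw
            (intervalIntegral.integral_nonneg hsr fun t _ => norm_nonneg _)
      _ = ∫ t, G (w, t) ∂ν := by
          rw [integral_const_mul (μ := ν) (φ w), integral_Icc_eq_integral_Ioc,
            ← intervalIntegral.integral_of_le hsr]
  calc ‖∫ w, φ w • u (x - r • w) ∂μ - ∫ w, φ w • u (x - s • w) ∂μ‖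
      = ‖∫ w, (φ w • u (x - r • w) - φ w • u (x - s • w)) ∂μ‖ := by
        rw [integral_sub (hint r) (hint s)]
    _ ≤ ∫ w, ∫ t, G (w, t) ∂ν ∂μ :=
        (norm_integral_le_integral_norm _).trans (integral_mono_of_nonneg
          (.of_forall fun _ => norm_nonneg _) hGint.integral_prod_left (.of_forall hpointwise))
    _ = ∫ t, ∫ w, G (w, t) ∂μ ∂ν := integral_integral_swap hGint
    _ ≤ B * ν.real univ := (Real.le_norm_self _).trans
        (norm_integral_le_of_norm_le_const ((ae_restrict_mem measurableSet_Icc).mono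
          fun t ht => (Real.norm_of_nonneg (integral_nonneg fun w =>
            mul_nonneg (hφ0 w) (norm_nonneg _))).trans_le (hB t ht)))
    _ = (r - s) * B := by
        rw [measureReal_restrict_apply_univ, Real.volume_real_Icc_of_le hsr, mul_comm]

theorem norm_cutoffMollify_sub_le [Nontrivial E] [CompleteSpace F] {ψ : ℝ → ℝ}
    (hψ : ContinuousOn ψ (Ici 0)) (hψ_mem : ∀ t, 0 ≤ t → ψ t ∈ Icc 0 1)
    (hψ_supp : ∀ t, 1 ≤ t → ψ t = 0) {u : E → F} (hu : ContDiff ℝ 1 u)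
    (hDu : Integrable (fun z => ‖fderiv ℝ u z‖ ^ (finrank ℝ E : ℝ)) μ) {r s : ℝ} (hs : 0 < s)
    (hsr : s ≤ r) (x : E) :
    ‖cutoffMollify μ ψ r u x - cutoffMollify μ ψ s u x‖ ≤
      (∫ w, ψ ‖w‖ ∂μ)⁻¹ * μ.real (closedBall 0 1) ^ (1 - 1 / (finrank ℝ E : ℝ)) * (r / s - 1) *
        (∫ z, ‖fderiv ℝ u z‖ ^ (finrank ℝ E : ℝ) ∂μ) ^ (1 / (finrank ℝ E : ℝ)) := by
  set d : ℝ := (finrank ℝ E : ℝ)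
  set K := (∫ z, ‖fderiv ℝ u z‖ ^ d ∂μ) ^ (1 / d) * μ.real (closedBall 0 1) ^ (1 - 1 / d)
  have hφ : Continuous fun w : E => ψ ‖w‖ :=
    hψ.comp_continuous continuous_norm fun w => norm_nonneg w
  have hφ0 : ∀ w : E, 0 ≤ ψ ‖w‖ := fun w => (hψ_mem _ (norm_nonneg w)).1
  have hφS : ∀ w ∉ closedBall (0 : E) 1, ψ ‖w‖ = 0 := fun w hw =>
    hψ_supp _ (not_le.1 (by simpa using hw)).le
  have hdilate : ∀ t ∈ Icc s r, ∫ w, ψ ‖w‖ * ‖fderiv ℝ u (x - t • w)‖ ∂μ ≤ s⁻¹ * K :=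
    fun t ht => (integral_mul_comp_sub_smul_le μ measure_closedBall_lt_top.ne
      hφ.aestronglyMeasurable hφ0 (fun w => (hψ_mem _ (norm_nonneg w)).2) hφS
      (hu.continuous_fderiv one_ne_zero).norm.measurable (fun z => norm_nonneg _) hDu x
      (hs.trans_le ht.1)).trans (by gcongr; exact ht.1)
  have hc : 0 ≤ (∫ w, ψ ‖w‖ ∂μ)⁻¹ := inv_nonneg.2 (integral_nonneg hφ0)
  rw [cutoffMollify_eq_integral_comp_sub_smul μ ψ u (hs.trans_le hsr),
    cutoffMollify_eq_integral_comp_sub_smul μ ψ u hs, ← smul_sub, norm_smul,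
    Real.norm_of_nonneg hc]
  calc _ ≤ (∫ w, ψ ‖w‖ ∂μ)⁻¹ * ((r - s) * (s⁻¹ * K)) := by
        gcongr
        exact norm_integral_smul_comp_sub_smul_sub_le μ hφ hφ0 hφS hu x hsr hdilate
    _ = _ := by
        field_simp
        ring

end

/-- Let `ψ` be a cutoff function with `∫_{ℝⁿ} ψ(|w|) dw > 0` and let
`u : ℝⁿ → ℝ^ν` be `C¹` with finite critical energy `∫ ‖Du‖ⁿ < ∞`. There is `C = C(n, ψ)` such
that for all `0 < s ≤ r < 2s`,
`sup_x ‖(ψ_r ∗ u)(x) − (ψ_s ∗ u)(x)‖ ≤ C (r/s − 1) (∫ ‖Du‖ⁿ)^{1/n}`;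
in particular `ψ_s ∗ u → ψ_r ∗ u` uniformly as `s → r`, for every `r > 0`. -/
theorem stmt_9 (n : ℕ) (hn : 1 ≤ n) (ψ : ℝ → ℝ) (L : NNReal)
    (hψ_lip : LipschitzOnWith L ψ (Set.Ici 0))
    (hψ_mem : ∀ t : ℝ, 0 ≤ t → ψ t ∈ Set.Icc (0 : ℝ) 1)
    (hψ_supp : ∀ t : ℝ, 1 ≤ t → ψ t = 0)
    (hψ_pos : 0 < ∫ w : EuclideanSpace ℝ (Fin n), ψ ‖w‖) :
    ∃ C : ℝ, 0 < C ∧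
      ∀ (ν : ℕ) (u : EuclideanSpace ℝ (Fin n) → EuclideanSpace ℝ (Fin ν)),
        ContDiff ℝ 1 u →
        Integrable (fun z => ‖fderiv ℝ u z‖ ^ (n : ℝ)) volume →
        (∀ r s : ℝ, 0 < s → s ≤ r → r < 2 * s →
          ∀ x : EuclideanSpace ℝ (Fin n),
            ‖((∫ z, ψ (dist x z / r))⁻¹ • ∫ z, ψ (dist x z / r) • u z)
                - ((∫ z, ψ (dist x z / s))⁻¹ • ∫ z, ψ (dist x z / s) • u z)‖
              ≤ C * (r / s - 1) *
                (∫ z, ‖fderiv ℝ u z‖ ^ (n : ℝ)) ^ ((1 : ℝ) / n)) ∧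
        ∀ r : ℝ, 0 < r →
          TendstoUniformly
            (fun (s : ℝ) (x : EuclideanSpace ℝ (Fin n)) =>
              (∫ z, ψ (dist x z / s))⁻¹ • ∫ z, ψ (dist x z / s) • u z)
            (fun x : EuclideanSpace ℝ (Fin n) =>
              (∫ z, ψ (dist x z / r))⁻¹ • ∫ z, ψ (dist x z / r) • u z)
            (nhdsWithin r (Set.Ioi (0 : ℝ))) := by
  have : Nonempty (Fin n) := ⟨⟨0, hn⟩⟩
  have hV : 0 < volume.real (closedBall (0 : EuclideanSpace ℝ (Fin n)) 1) :=
    ENNReal.toReal_pos (measure_closedBall_pos volume 0 one_pos).ne' measure_closedBall_lt_top.ne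
  set C := (∫ w : EuclideanSpace ℝ (Fin n), ψ ‖w‖)⁻¹ *
    volume.real (closedBall (0 : EuclideanSpace ℝ (Fin n)) 1) ^ (1 - (1 : ℝ) / n)
  have hC : 0 < C := mul_pos (inv_pos.2 hψ_pos) (Real.rpow_pos_of_pos hV _)
  refine ⟨C, hC, fun ν u hu hDu => ?_⟩
  set D := (∫ z, ‖fderiv ℝ u z‖ ^ (n : ℝ)) ^ ((1 : ℝ) / n)
  have hest : ∀ r s : ℝ, 0 < s → s ≤ r → ∀ x,
      ‖cutoffMollify volume ψ r u x - cutoffMollify volume ψ s u x‖ ≤ C * (r / s - 1) * D :=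
    fun r s hs hsr x => by
      simpa only [finrank_euclideanSpace_fin] using norm_cutoffMollify_sub_le volume
        hψ_lip.continuousOn hψ_mem hψ_supp hu
        (by simpa only [finrank_euclideanSpace_fin] using hDu) hs hsr x
  refine ⟨fun r s hs hsr _ x => hest r s hs hsr x, fun r hr => ?_⟩
  refine tendstoUniformly_nhdsWithin_of_dist_le_mul_div_sub_one
    (G := fun s => cutoffMollify volume ψ s u) (K := C * D) (mul_nonneg hC.le (by positivity))
    (fun r s hs hsr x => ?_) hr
  rw [dist_eq_norm]
  exact (hest r s hs hsr x).trans_eq (by ring)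
end
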